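/- arXiv:1206.2084 — 9 statements merged into one kernel-verified Lean document; each statement's English description precedes it below -/
import Mathlib

section
/- A natural number n ≥ 1 is practical (in the sense of Srinivasan) if and only if for every prime p dividing n one has p ≤ 1 + σ(n_{<p}), where n_{<p} denotes the largest divisor of n all of whose prime factors are less than p (i.e., n_{<p} = ∏_{q prime, q < p} q^{v_q(n)}, with v_q(n) the exponent of q in n). -/
open Finset

/-- `n` is practical (in the sense of Srinivasan) if every `1 ≤ m ≤ σ(n)` is a sum of
distinct divisors of `n`. -/
def IsPractical (n : ℕ) : Prop :=
  ∀ m : ℕ, 1 ≤ m → m ≤ ∑ d ∈ n.divisors, d →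
    ∃ s : Finset ℕ, s ⊆ n.divisors ∧ ∑ d ∈ s, d = m

/-- representation allowing `0` -/
lemma prac_rep {m s : ℕ} (H : IsPractical m) (hs : s ≤ ∑ d ∈ m.divisors, d) :
    ∃ t : Finset ℕ, t ⊆ m.divisors ∧ ∑ d ∈ t, d = s := by
  rcases Nat.eq_zero_or_pos s with rfl | h
  · exact ⟨∅, by simp, by simp⟩
  · exact H s h hs

lemma geom_sum_pred (p : ℕ) (hp : 1 ≤ p) (n : ℕ) :
    (p - 1) * ∑ k ∈ Finset.range n, p ^ k + 1 = p ^ n := by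
  induction n with
  | zero => simp
  | succ n ih =>
    rw [Finset.sum_range_succ, Nat.mul_add, pow_succ]
    have h : p ^ n * p = (p - 1) * p ^ n + p ^ n := by
      rw [Nat.sub_one_mul, mul_comm]
      have hx : p ^ n ≤ p * p ^ n := Nat.le_mul_of_pos_left _ hp
      omega
    omega

lemma self_le_sigma {m : ℕ} (hm : m ≠ 0) : m ≤ ∑ d ∈ m.divisors, d :=
  Finset.single_le_sum (f := fun d => d) (fun _ _ => Nat.zero_le _)
    (Nat.mem_divisors_self m hm)

lemma practical_mul_prime_pow {m p : ℕ} (hm : m ≠ 0) (hp : p.Prime) (hpm : ¬ p ∣ m)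
    (hple : p ≤ 1 + ∑ d ∈ m.divisors, d) (H : IsPractical m) (a : ℕ) :
    IsPractical (m * p ^ a) := by
  induction a with
  | zero => simpa using H
  | succ a ih =>
    have hcop : ∀ b : ℕ, m.Coprime (p ^ b) := fun b =>
      (Nat.Prime.coprime_iff_not_dvd hp).mpr hpm |>.symm.pow_right b
    set Sm := ∑ d ∈ m.divisors, d with hSm
    set Sa := ∑ d ∈ (m * p ^ a).divisors, d with hSa
    have hsiga : Sa = Sm * ∑ k ∈ Finset.range (a + 1), p ^ k := by
      rw [hSa, (hcop a).sum_divisors_mul,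
        ← ArithmeticFunction.sigma_one_apply (p ^ a),
        ArithmeticFunction.sigma_one_apply_prime_pow hp]
    have hsig : ∑ d ∈ (m * p ^ (a + 1)).divisors, d = Sa + Sm * p ^ (a + 1) := by
      rw [(hcop (a + 1)).sum_divisors_mul,
        ← ArithmeticFunction.sigma_one_apply (p ^ (a + 1)),
        ArithmeticFunction.sigma_one_apply_prime_pow hp, Finset.sum_range_succ,
        Nat.mul_add, hsiga]
    intro N hN1 hN2
    rw [hsig] at hN2
    set P := p ^ (a + 1) with hP
    have hP0 : 0 < P := pow_pos hp.pos _
    set t := min Sm (N / P) with ht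
    have htP : t * P ≤ N := by
      calc t * P ≤ N / P * P := Nat.mul_le_mul_right _ (min_le_right _ _)
        _ ≤ N := Nat.div_mul_le_self _ _
    set s := N - t * P with hs
    have htSm : t ≤ Sm := min_le_left _ _
    -- s ≤ Sa
    have hpSm : p - 1 ≤ Sm := by omega
    have hsSa : s ≤ Sa := by
      rcases le_or_gt (N / P) Sm with h | h
      · have ht' : t = N / P := by omega
        have hdm := Nat.div_add_mod N P
        have hcomm : N / P * P = P * (N / P) := mul_comm _ _
        have hmodlt : N % P < P := Nat.mod_lt _ hP0
        have hPle : P ≤ Sa + 1 := by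
          rw [hsiga, hP]
          calc p ^ (a + 1) = (p - 1) * ∑ k ∈ Finset.range (a + 1), p ^ k + 1 :=
            (geom_sum_pred p hp.one_lt.le _).symm
          _ ≤ Sm * ∑ k ∈ Finset.range (a + 1), p ^ k + 1 :=
            by gcongr
        rw [hs, ht']
        omega
      · have ht' : t = Sm := by omega
        have hge : Sm * P ≤ N := by
          calc Sm * P ≤ (N / P) * P := Nat.mul_le_mul_right _ (by omega)
          _ ≤ N := Nat.div_mul_le_self _ _
        rw [hs, ht']
        omega
    obtain ⟨T, hT, hTsum⟩ := prac_rep H htSm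
    obtain ⟨S, hSsub, hSsum⟩ := prac_rep ih hsSa
    -- final set
    refine ⟨S ∪ T.image (· * P), ?_, ?_⟩
    · intro x hx
      rcases Finset.mem_union.mp hx with hx | hx
      · exact Nat.divisors_subset_of_dvd (by positivity)
          (mul_dvd_mul_left m (pow_dvd_pow p (by omega))) (hSsub hx)
      · obtain ⟨d, hd, rfl⟩ := Finset.mem_image.mp hx
        have hdm : d ∣ m := (Nat.mem_divisors.mp (hT hd)).1
        exact Nat.mem_divisors.mpr ⟨mul_dvd_mul hdm dvd_rfl, by positivity⟩
    · have hdisj : Disjoint S (T.image (· * P)) := by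
        rw [Finset.disjoint_left]
        rintro x hxS hxT
        obtain ⟨d, hd, rfl⟩ := Finset.mem_image.mp hxT
        have hx1 : d * P ∣ m * p ^ a := (Nat.mem_divisors.mp (hSsub hxS)).1
        have hd1 : 1 ≤ d := Nat.pos_of_mem_divisors (hT hd)
        have hPdvd : P ∣ m * p ^ a := dvd_trans (Dvd.intro_left d rfl) hx1
        have hPdvd' : p ^ a * p ∣ m * p ^ a := by rwa [hP, pow_succ] at hPdvd
        have h2 : p * p ^ a ∣ m * p ^ a := by rwa [mul_comm (p ^ a) p] at hPdvd'
        exact hpm ((Nat.mul_dvd_mul_iff_right (pow_pos hp.pos a)).mp h2)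
      rw [Finset.sum_union hdisj, hSsum, Finset.sum_image
        (fun x _ y _ h => Nat.eq_of_mul_eq_mul_right hP0 h), ← Finset.sum_mul, hTsum]
      omega

lemma lowPart_factorization (n p : ℕ) (r : ℕ) :
    (∏ q ∈ n.primeFactors.filter (fun q => q < p), q ^ n.factorization q).factorization r
    = if r ∈ n.primeFactors.filter (fun q => q < p) then n.factorization r else 0 := by
  rw [Nat.factorization_prod (fun q hq =>
    pow_ne_zero _ (Nat.prime_of_mem_primeFactors (Finset.mem_filter.mp hq).1).pos.ne')]
  rw [Finsupp.finset_sum_apply]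
  rw [Finset.sum_congr rfl (fun q hq => by
    rw [(Nat.prime_of_mem_primeFactors (Finset.mem_filter.mp hq).1).factorization_pow,
      Finsupp.single_apply])]
  exact Finset.sum_ite_eq' _ _ _

lemma lowPart_ne_zero (n p : ℕ) :
    (∏ q ∈ n.primeFactors.filter (fun q => q < p), q ^ n.factorization q) ≠ 0 :=
  (Finset.prod_pos (fun q hq =>
    pow_pos (Nat.prime_of_mem_primeFactors (Finset.mem_filter.mp hq).1).pos _)).ne'

/-- forward direction -/
lemma forward_dir {n : ℕ} (hn : 1 ≤ n) (H : IsPractical n) {p : ℕ} (hp : p.Prime)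
    (hpn : p ∣ n) :
    p ≤ 1 + ∑ d ∈ (∏ q ∈ n.primeFactors.filter (fun q => q < p),
      q ^ n.factorization q).divisors, d := by
  set M := ∏ q ∈ n.primeFactors.filter (fun q => q < p), q ^ n.factorization q with hM
  have hn0 : n ≠ 0 := by omega
  have hM0 : M ≠ 0 := lowPart_ne_zero n p
  have hp1 : 1 ≤ p - 1 := by have := hp.two_le; omega
  have hple : p - 1 ≤ ∑ d ∈ n.divisors, d :=
    le_trans (by have := Nat.le_of_dvd (by omega) hpn; omega) (self_le_sigma hn0)
  obtain ⟨s, hs, hssum⟩ := H (p - 1) hp1 hple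
  have hsub : s ⊆ M.divisors := by
    intro d hd
    have hdn : d ∣ n := (Nat.mem_divisors.mp (hs hd)).1
    have hd0 : d ≠ 0 := (Nat.pos_of_mem_divisors (hs hd)).ne'
    have hdlt : d < p := by
      have : d ≤ p - 1 := hssum ▸ Finset.single_le_sum
        (f := fun d => d) (fun _ _ => Nat.zero_le _) hd
      omega
    refine Nat.mem_divisors.mpr ⟨?_, hM0⟩
    rw [← Nat.factorization_le_iff_dvd hd0 hM0]
    intro r
    rcases Nat.eq_zero_or_pos (d.factorization r) with h0 | h0
    · simp [h0]
    · have hr : r ∈ d.primeFactors := by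
        rw [← Nat.support_factorization]; exact Finsupp.mem_support_iff.mpr (by omega)
      have hrp : r.Prime := Nat.prime_of_mem_primeFactors hr
      have hrd : r ∣ d := Nat.dvd_of_mem_primeFactors hr
      have hrn : r ∈ n.primeFactors.filter (fun q => q < p) := by
        refine Finset.mem_filter.mpr ⟨Nat.mem_primeFactors.mpr ⟨hrp, hrd.trans hdn, hn0⟩, ?_⟩
        exact lt_of_le_of_lt (Nat.le_of_dvd (by omega) hrd) hdlt
      rw [hM, lowPart_factorization, if_pos hrn]
      exact (Nat.factorization_le_iff_dvd hd0 hn0).mpr hdn r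
  have : p - 1 ≤ ∑ d ∈ M.divisors, d := by
    rw [← hssum]
    exact Finset.sum_le_sum_of_subset hsub
  omega

lemma backward_dir : ∀ n : ℕ, 1 ≤ n →
    (∀ p : ℕ, p.Prime → p ∣ n →
      p ≤ 1 + ∑ d ∈ (∏ q ∈ n.primeFactors.filter (fun q => q < p),
        q ^ n.factorization q).divisors, d) → IsPractical n := by
  intro n
  induction n using Nat.strong_induction_on with
  | _ n IH =>
    intro hn H
    rcases eq_or_lt_of_le hn with h1 | h2
    · -- n = 1
      intro m hm1 hm2
      rw [← h1] at hm2
      simp only [Nat.divisors_one, Finset.sum_singleton] at hm2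
      refine ⟨{1}, ?_, ?_⟩
      · rw [← h1]; simp
      · simp; omega
    · have hn0 : n ≠ 0 := by omega
      have hne : n.primeFactors.Nonempty := Nat.nonempty_primeFactors.mpr h2
      set p := n.primeFactors.max' hne with hpdef
      have hpmem : p ∈ n.primeFactors := Finset.max'_mem _ hne
      have hp : p.Prime := Nat.prime_of_mem_primeFactors hpmem
      have hpn : p ∣ n := Nat.dvd_of_mem_primeFactors hpmem
      have hmax : ∀ q ∈ n.primeFactors, q ≤ p := fun q hq => Finset.le_max' _ q hq
      set a := n.factorization p with ha
      have ha1 : 1 ≤ a := (Nat.Prime.factorization_pos_of_dvd hp hn0 hpn)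
      set M := ∏ q ∈ n.primeFactors.filter (fun q => q < p), q ^ n.factorization q with hM
      have hM0 : M ≠ 0 := lowPart_ne_zero n p
      -- n = M * p ^ a
      have hnM : n = M * p ^ a := by
        conv_lhs => rw [← Nat.factorization_prod_pow_eq_self hn0]
        rw [Finsupp.prod]
        rw [Nat.support_factorization]
        rw [← Finset.prod_filter_mul_prod_filter_not n.primeFactors (fun q => q < p)]
        congr 1
        have : n.primeFactors.filter (fun q => ¬ q < p) = {p} := by
          ext q
          simp only [Finset.mem_filter, Finset.mem_singleton, not_lt]
          constructor
          · rintro ⟨hq, hqle⟩; exact le_antisymm (hmax q hq) hqle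
          · rintro rfl; exact ⟨hpmem, le_refl _⟩
        rw [this, Finset.prod_singleton]
      have hMdvd : M ∣ n := hnM ▸ Dvd.intro _ rfl
      have hMlt : M < n := by
        have hM1 : 1 ≤ M := Nat.pos_of_ne_zero hM0
        have : 2 ≤ p ^ a := le_trans hp.two_le (Nat.le_self_pow (by omega) p)
        calc M = M * 1 := (mul_one M).symm
          _ < M * p ^ a := mul_lt_mul_of_pos_left (by omega) (by omega)
          _ = n := hnM.symm
      have hMfac : ∀ r, M.factorization r =
          if r ∈ n.primeFactors.filter (fun q => q < p) then n.factorization r else 0 :=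
        lowPart_factorization n p
      have hMpf : M.primeFactors = n.primeFactors.filter (fun q => q < p) := by
        ext r
        rw [← Nat.support_factorization, Finsupp.mem_support_iff, hMfac r]
        constructor
        · intro h; by_contra hc; rw [if_neg hc] at h; exact h rfl
        · intro h
          rw [if_pos h]
          have := Nat.prime_of_mem_primeFactors (Finset.mem_filter.mp h).1
          exact (Nat.Prime.factorization_pos_of_dvd this hn0
            (Nat.dvd_of_mem_primeFactors (Finset.mem_filter.mp h).1)).ne'
      -- IH hypothesis for M
      have HM : IsPractical M := by
        refine IH M hMlt (Nat.pos_of_ne_zero hM0) ?_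
        intro q hq hqM
        have hqpf : q ∈ M.primeFactors := Nat.mem_primeFactors.mpr ⟨hq, hqM, hM0⟩
        rw [hMpf] at hqpf
        obtain ⟨hqn, hqlt⟩ := Finset.mem_filter.mp hqpf
        have hqdvdn : q ∣ n := Nat.dvd_of_mem_primeFactors hqn
        have hsets : M.primeFactors.filter (fun r => r < q)
            = n.primeFactors.filter (fun r => r < q) := by
          rw [hMpf, Finset.filter_filter]
          apply Finset.filter_congr
          intro r _
          constructor
          · rintro ⟨_, h⟩; exact h
          · intro h; exact ⟨lt_trans h hqlt, h⟩
        have hprodeq : (∏ r ∈ M.primeFactors.filter (fun r => r < q),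
            r ^ M.factorization r)
            = ∏ r ∈ n.primeFactors.filter (fun r => r < q), r ^ n.factorization r := by
          rw [hsets]
          apply Finset.prod_congr rfl
          intro r hr
          have hrfil : r ∈ n.primeFactors.filter (fun s => s < p) := by
            obtain ⟨h1, h2⟩ := Finset.mem_filter.mp hr
            exact Finset.mem_filter.mpr ⟨h1, lt_trans h2 hqlt⟩
          rw [hMfac r, if_pos hrfil]
        rw [hprodeq]
        exact H q hq hqdvdn
      -- condition for p itself
      have hpcond : p ≤ 1 + ∑ d ∈ M.divisors, d := H p hp hpn
      have hpM : ¬ p ∣ M := by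
        intro h
        have : p ∈ M.primeFactors := Nat.mem_primeFactors.mpr ⟨hp, h, hM0⟩
        rw [hMpf] at this
        exact absurd (Finset.mem_filter.mp this).2 (lt_irrefl p)
      rw [hnM]
      exact practical_mul_prime_pow hM0 hp hpM hpcond HM a

/-- The Stewart–Sierpiński criterion: `n ≥ 1` is practical iff for every prime `p ∣ n`
one has `p ≤ 1 + σ(n_{<p})`, where `n_{<p}` is the largest divisor of `n` all of whose
prime factors are less than `p`. -/
theorem isPractical_iff (n : ℕ) (hn : 1 ≤ n) :
    IsPractical n ↔ ∀ p : ℕ, p.Prime → p ∣ n →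
      p ≤ 1 + ∑ d ∈ (∏ q ∈ n.primeFactors.filter (fun q => q < p),
        q ^ n.factorization q).divisors, d := by
  constructor
  · intro H p hp hpn
    exact forward_dir hn H hp hpn
  · intro H
    exact backward_dir n hn H
end

section
/- For every prime number p, the product of all primes strictly less than p is at least p − 1 (where the empty product is interpreted as 1). -/
/-- For every prime `p`, the product of all primes strictly less than `p`
is at least `p - 1`. -/
theorem primeProduct_ge (p : ℕ) (hp : p.Prime) :
    p - 1 ≤ ∏ q ∈ (Finset.range p).filter Nat.Prime, q := by
  rcases lt_or_ge p 5 with h5 | h5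
  · interval_cases p <;> simp_all <;> decide
  -- p ≥ 5, p prime hence odd
  have hodd : Odd p := hp.odd_of_ne_two (by omega)
  obtain ⟨q, hq, hlt, hle⟩ := Nat.exists_prime_lt_and_le_two_mul (p / 2) (by omega)
  have hq2 : q ≠ 2 := by omega
  obtain ⟨k, hk⟩ := hodd
  have hqp : q < p := by omega
  have hsub : ({2, q} : Finset ℕ) ⊆ (Finset.range p).filter Nat.Prime := by
    intro x hx
    simp only [Finset.mem_insert, Finset.mem_singleton] at hx
    simp only [Finset.mem_filter, Finset.mem_range]
    rcases hx with rfl | rfl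
    · exact ⟨by omega, Nat.prime_two⟩
    · exact ⟨hqp, hq⟩
  have hprod : (∏ x ∈ ({2, q} : Finset ℕ), x) ≤
      ∏ x ∈ (Finset.range p).filter Nat.Prime, x := by
    apply Finset.prod_le_prod_of_subset_of_one_le' hsub
    intro i hi _
    exact (Finset.mem_filter.mp hi).2.one_lt.le
  have : (∏ x ∈ ({2, q} : Finset ℕ), x) = 2 * q := by
    rw [Finset.prod_pair (Ne.symm hq2)]
  omega
end

section
/- Let F be a number field. If n is an F-practical natural number and p is the smallest prime not dividing n (i.e., p is prime, p does not divide n, and every prime q < p divides n), then p·n is also F-practical. -/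
/-- A natural number `n ≥ 1` is `F`-practical if for every `m` with `0 ≤ m ≤ n`,
the polynomial `X^n - 1` has a monic divisor of degree `m` in `F[X]`. -/
def IsFPractical (F : Type*) [Field F] (n : ℕ) : Prop :=
  1 ≤ n ∧ ∀ m : ℕ, m ≤ n → ∃ d : Polynomial F, d.Monic ∧
    d ∣ (Polynomial.X ^ n - 1) ∧ d.natDegree = m

/-!
Write `m ≤ p n` as `m = (p - 1) a + b` with `a, b ≤ n`; this is possible because `p - 1 ≤ n`,
which follows from Bertrand's postulate. Let `d ∣ X^n - 1` be monic of degree `a`. As `p` is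
coprime to `n`, `ζ ↦ ζ^p` permutes the `n`-th roots of unity, so `c = gcd(d(X^p), X^n - 1)`
again has degree `a`. Since `d(X^p)` divides `X^{pn} - 1`, it is squarefree, so its cofactor
`g = d(X^p) / c`, of degree `(p - 1) a`, is coprime to `X^n - 1`. Multiplying `g` by a monic
divisor of `X^n - 1` of degree `b` gives a monic divisor of `X^{pn} - 1` of degree `m`.
-/

open Polynomial
open scoped Finset

section RootsOfUnity

variable {K : Type*} [Field K] {n p : ℕ}

theorem pow_mem_nthRootsFinset_one {ζ : K} (hζ : ζ ∈ nthRootsFinset n (1 : K)) (k : ℕ) :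
    ζ ^ k ∈ nthRootsFinset n (1 : K) := by
  have hn : 0 < n := Nat.pos_of_ne_zero (by rintro rfl; simp at hζ)
  rw [mem_nthRootsFinset hn] at hζ ⊢
  rw [← pow_mul, mul_comm, pow_mul, hζ, one_pow]

theorem pow_injOn_nthRootsFinset (hcop : p.Coprime n) :
    Set.InjOn (· ^ p) (nthRootsFinset n (1 : K) : Set K) := by
  obtain rfl | hn := n.eq_zero_or_pos
  · simp
  intro ζ hζ ξ hξ hζξ
  have hξ0 : ξ ≠ 0 := ne_zero_of_mem_nthRootsFinset one_ne_zero hξ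
  rw [Finset.mem_coe, mem_nthRootsFinset hn] at hζ hξ
  have h : (ζ / ξ) ^ p.gcd n = 1 :=
    pow_gcd_eq_one.2 ⟨by simp [div_pow, hζξ, hξ0], by simp [div_pow, hζ, hξ]⟩
  rwa [hcop, pow_one, div_eq_one_iff_eq hξ0] at h

theorem pow_bijOn_nthRootsFinset (hcop : p.Coprime n) :
    Set.BijOn (· ^ p) (nthRootsFinset n (1 : K) : Set K) (nthRootsFinset n (1 : K)) := by
  have hmaps : Set.MapsTo (· ^ p) (nthRootsFinset n (1 : K) : Set K) (nthRootsFinset n (1 : K)) :=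
    fun _ hζ => pow_mem_nthRootsFinset_one hζ p
  exact ⟨hmaps, pow_injOn_nthRootsFinset hcop,
    Finset.surjOn_of_injOn_of_card_le _ hmaps (pow_injOn_nthRootsFinset hcop) le_rfl⟩

theorem card_filter_nthRootsFinset_pow (hcop : p.Coprime n) (P : K → Prop) [DecidablePred P] :
    #{ζ ∈ nthRootsFinset n (1 : K) | P (ζ ^ p)} = #{ζ ∈ nthRootsFinset n (1 : K) | P ζ} := by
  have h := pow_bijOn_nthRootsFinset (K := K) hcop
  refine Finset.card_nbij (· ^ p) (fun ζ hζ => ?_)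
    (h.injOn.mono (Finset.coe_subset.2 (Finset.filter_subset _ _))) (fun η hη => ?_)
  · simp only [Finset.coe_filter, Set.mem_ofPred_eq] at hζ ⊢
    exact ⟨h.mapsTo hζ.1, hζ.2⟩
  · simp only [Finset.coe_filter, Set.mem_ofPred_eq] at hη
    obtain ⟨ζ, hζ, rfl⟩ := h.surjOn hη.1
    exact ⟨ζ, by simpa using ⟨hζ, hη.2⟩, rfl⟩

end RootsOfUnity

section Polynomial

variable {F : Type*} [Field F]

theorem separable_X_pow_sub_one {N : ℕ} (hN : (N : F) ≠ 0) : (X ^ N - 1 : F[X]).Separable := by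
  simpa using separable_X_pow_sub_C (1 : F) hN one_ne_zero

theorem expand_X_pow_sub_one (p n : ℕ) : expand F p (X ^ n - 1) = X ^ (p * n) - 1 := by
  simp [pow_mul]

theorem aeval_gcd_eq_zero_iff [DecidableEq F] {A : Type*} [CommRing A] [Algebra F A] (x : A)
    (f g : F[X]) : aeval x (gcd f g) = 0 ↔ aeval x f = 0 ∧ aeval x g = 0 := by
  refine ⟨fun h => ⟨aeval_eq_zero_of_dvd_aeval_eq_zero (gcd_dvd_left f g) h,
    aeval_eq_zero_of_dvd_aeval_eq_zero (gcd_dvd_right f g) h⟩, fun ⟨hf, hg⟩ => ?_⟩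
  obtain ⟨r, s, hrs⟩ := exists_gcd_eq_mul_add_mul f g
  rw [hrs, map_add, map_mul, map_mul, hf, hg, zero_mul, zero_mul, add_zero]

theorem monic_gcd_of_ne_zero_left [DecidableEq F] {f g : F[X]} (hf : f ≠ 0) :
    (gcd f g).Monic := by
  rw [← normalize_gcd]
  exact monic_normalize (gcd_ne_zero_of_left hf)

theorem natDegree_eq_card_filter_nthRootsFinset (K : Type*) [Field K] [IsAlgClosed K]
    [DecidableEq K] [Algebra F K] {N : ℕ} (hN : (N : F) ≠ 0) {f : F[X]} (hf : f ∣ X ^ N - 1) :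
    f.natDegree = #{ζ ∈ nthRootsFinset N (1 : K) | aeval ζ f = 0} := by
  have hN0 : 0 < N := Nat.pos_of_ne_zero (by rintro rfl; simp at hN)
  have hf0 : f ≠ 0 := by rintro rfl; exact X_pow_sub_C_ne_zero hN0 (1 : F) (by simpa using hf)
  rw [← card_rootSet_eq_natDegree ((separable_X_pow_sub_one hN).of_dvd hf)
    (IsAlgClosed.splits (k := K) _), ← Set.toFinset_card]
  congr 1
  ext ζ
  simp only [Set.mem_toFinset, mem_rootSet_of_ne hf0, Finset.mem_filter, mem_nthRootsFinset hN0,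
    iff_and_self]
  intro hζ
  simpa [sub_eq_zero] using aeval_eq_zero_of_dvd_aeval_eq_zero hf hζ

theorem exists_monic_dvd_X_pow_mul_sub_one_isCoprime {n p : ℕ} (hpn : ((p * n : ℕ) : F) ≠ 0)
    (hcop : p.Coprime n) {d : F[X]} (hd : d.Monic) (hdn : d ∣ X ^ n - 1) :
    ∃ g : F[X], g.Monic ∧ g ∣ X ^ (p * n) - 1 ∧ IsCoprime g (X ^ n - 1) ∧
      g.natDegree = (p - 1) * d.natDegree := by
  classical
  have hp : 0 < p := Nat.pos_of_ne_zero (by rintro rfl; simp at hpn)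
  have hn : (n : F) ≠ 0 := by rw [Nat.cast_mul] at hpn; exact right_ne_zero_of_mul hpn
  set P := expand F p d
  have hPpn : P ∣ X ^ (p * n) - 1 := by
    rw [← expand_X_pow_sub_one]; exact _root_.map_dvd (expand F p) hdn
  set c := gcd P (X ^ n - 1)
  obtain ⟨g, hPcg⟩ : c ∣ P := gcd_dvd_left _ _
  have hgP : g ∣ P := Dvd.intro_left c hPcg.symm
  have hc : c.Monic := monic_gcd_of_ne_zero_left (hd.expand hp).ne_zero
  have hg : g.Monic := hc.of_mul_monic_left (by rw [← hPcg]; exact hd.expand hp)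
  have hcd : c.natDegree = d.natDegree := by
    let K := AlgebraicClosure F
    rw [natDegree_eq_card_filter_nthRootsFinset K hn (gcd_dvd_right _ _),
      natDegree_eq_card_filter_nthRootsFinset K hn hdn,
      ← card_filter_nthRootsFinset_pow hcop (fun η : K => aeval η d = 0)]
    congr 1
    refine Finset.filter_congr fun ζ hζ => ?_
    rw [mem_nthRootsFinset (Nat.pos_of_ne_zero (by rintro rfl; simp at hn))] at hζ
    simp [aeval_gcd_eq_zero_iff, P, expand_aeval, hζ]
  refine ⟨g, hg, hgP.trans hPpn, ?_, ?_⟩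
  · have hcg : IsRelPrime c g := by
      rw [hPcg] at hPpn
      exact (squarefree_mul_iff.1 ((separable_X_pow_sub_one hpn).of_dvd hPpn).squarefree).1
    exact IsRelPrime.isCoprime fun e heg hen => hcg (dvd_gcd (heg.trans hgP) hen) heg
  · have hdeg := congrArg natDegree hPcg
    rw [natDegree_expand, hc.natDegree_mul hg, hcd] at hdeg
    rw [Nat.sub_mul, one_mul, mul_comm, hdeg, Nat.add_sub_cancel_left]

end Polynomial

theorem exists_eq_mul_add_of_le_mul_add {k n m : ℕ} (hk : k ≤ n + 1) (hm : m ≤ k * n + n) :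
    ∃ a ≤ n, ∃ b ≤ n, m = k * a + b := by
  by_cases h : k * n ≤ m
  · exact ⟨n, le_rfl, m - k * n, by omega, by omega⟩
  · have hk0 : 0 < k := Nat.pos_of_ne_zero (by rintro rfl; omega)
    exact ⟨m / k, Nat.div_le_of_le_mul (by omega), m % k, by have := Nat.mod_lt m hk0; omega,
      (Nat.div_add_mod m k).symm⟩

theorem Nat.Prime.sub_one_le_of_forall_prime_lt_dvd {p n : ℕ} (hp : p.Prime) (hn : 0 < n)
    (hmin : ∀ q : ℕ, q.Prime → q < p → q ∣ n) : p - 1 ≤ n := by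
  rcases hp.eq_two_or_odd' with rfl | hodd
  · omega
  have hp2 := hp.two_le
  have hpodd := Nat.odd_iff.1 hodd
  have h2n : 2 ∣ n := hmin 2 Nat.prime_two (by omega)
  obtain ⟨q, hq, hlt, hle⟩ := Nat.exists_prime_lt_and_le_two_mul ((p - 1) / 2) (by omega)
  have hqn : q ∣ n := hmin q hq (by omega)
  rcases hq.eq_two_or_odd' with rfl | hqodd
  · have := Nat.le_of_dvd hn h2n
    omega
  · have h2q : 2 * q ∣ n := (Nat.coprime_two_left.2 hqodd).mul_dvd_of_dvd_of_dvd h2n hqn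
    have := Nat.le_of_dvd hn h2q
    omega

/-- If `n` is `F`-practical (for a number field `F`) and `p` is the smallest prime not
dividing `n`, then `p * n` is also `F`-practical. -/
theorem FPractical_mul_smallest_prime (F : Type*) [Field F] [NumberField F]
    (n p : ℕ) (hn : IsFPractical F n) (hp : p.Prime) (hpn : ¬ p ∣ n)
    (hmin : ∀ q : ℕ, q.Prime → q < p → q ∣ n) :
    IsFPractical F (p * n) := by
  obtain ⟨hn1, hdiv⟩ := hn
  have hcop : p.Coprime n := (Nat.Prime.coprime_iff_not_dvd hp).2 hpn
  have hpn0 : p * n ≠ 0 := mul_ne_zero hp.ne_zero (by omega)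
  have hp1 : p - 1 ≤ n := hp.sub_one_le_of_forall_prime_lt_dvd hn1 hmin
  have hpn_eq : (p - 1) * n + n = p * n := by
    rw [Nat.sub_one_mul, Nat.sub_add_cancel (Nat.le_mul_of_pos_left n hp.pos)]
  refine ⟨Nat.one_le_iff_ne_zero.2 hpn0, fun m hm => ?_⟩
  obtain ⟨a, ha, b, hb, rfl⟩ :=
    exists_eq_mul_add_of_le_mul_add (by omega : p - 1 ≤ n + 1) (hpn_eq ▸ hm)
  obtain ⟨d, hd, hdn, rfl⟩ := hdiv a ha
  obtain ⟨g, hg, hgpn, hgn, hgdeg⟩ :=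
    exists_monic_dvd_X_pow_mul_sub_one_isCoprime (Nat.cast_ne_zero.2 hpn0) hcop hd hdn
  obtain ⟨e, he, hen, rfl⟩ := hdiv b hb
  have hnpn : (X ^ n - 1 : F[X]) ∣ X ^ (p * n) - 1 := by
    simpa [← pow_mul, mul_comm] using sub_one_dvd_pow_sub_one (X ^ n : F[X]) p
  exact ⟨g * e, hg.mul he, (hgn.of_isCoprime_of_dvd_right hen).mul_dvd hgpn (hen.trans hnpn),
    by rw [hg.natDegree_mul he, hgdeg]⟩
end

section
/- There exists a constant C > 0 such that for all real numbers x ≥ 2, y ≥ 2 and every natural number k ≥ 1, the number of natural numbers n ≤ x with Ω(n; y) ≥ k is at most C·(k/2^k)·x·log y, where Ω(n; y) denotes the number of prime factors p ≤ y of n counted with multiplicity. -/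
/-- `BigOmegaBelow n y` is `Ω(n; y)`, the number of prime factors of `n` not exceeding
`y`, counted with multiplicity. -/
noncomputable def BigOmegaBelow (n : ℕ) (y : ℝ) : ℕ :=
  ∑ p ∈ n.primeFactors.filter (fun p : ℕ => (p : ℝ) ≤ y), n.factorization p

/-!
Let `Q` be the set of odd primes `≤ y`, so that `Ω(n; y) = ν₂(n) + Ω_Q(n)`. If `Ω(n; y) ≥ k` then
`min(ν₂(n), k) + Ω_Q(n) ≥ k`, so by Markov's inequality the count is at most
`2⁻ᵏ ∑_{n ≤ x} 2^{min(ν₂(n), k)} 2^{Ω_Q(n)}`.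

For a prime `p ∉ Q`, writing `2^{min(ν, K)} = 1 + ∑_{i < min(ν, K)} 2^i` and grouping the `n` by the
powers `p^{i+1} ∣ n` shows that the extra weight `2^{min(ν_p(n), K)}` costs at most a factor
`1 + ∑_{i < K} 2^i / p^{i+1}`. This is `1 + k/2` for `p = 2`, `K = k`, and at most `1 + 1/(p - 2)`
for odd `p`; adding the odd primes one at a time gives
`∑_{n ≤ x} 2^{Ω_Q(n)} ≤ x ∏_{p ∈ Q} (1 + 1/(p - 2))`. By Mertens' estimate
`∑_{p ≤ y} 1/p ≤ log log y + O(1)` (from Legendre's formula, Chebyshev's bound `θ(N) ≤ N log 4` and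
partial summation), this product is `O(log y)`.
-/

open Finset Real
open scoped Nat

lemma mem_primesLE_floor_iff {y : ℝ} (hy : 0 ≤ y) {p : ℕ} :
    p ∈ Nat.primesLE ⌊y⌋₊ ↔ p.Prime ∧ (p : ℝ) ≤ y := by
  rw [Nat.primesLE, Nat.mem_primesBelow, Nat.lt_succ_iff, Nat.le_floor_iff hy, and_comm]

lemma prime_and_three_le_of_mem_primesLE_erase_two {N p : ℕ} (hp : p ∈ (Nat.primesLE N).erase 2) :
    p.Prime ∧ 3 ≤ p :=
  have hp' := Nat.prime_of_mem_primesBelow (mem_of_mem_erase hp)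
  ⟨hp', hp'.two_le.lt_of_ne' (ne_of_mem_erase hp)⟩

lemma one_add_inv_sub_two_pos {x : ℝ} (hx : 2 < x) : 0 < 1 + (x - 2)⁻¹ := by
  have := inv_pos.2 (sub_pos.2 hx)
  linarith

lemma div_le_factorization_factorial {p : ℕ} (hp : p.Prime) (N : ℕ) :
    N / p ≤ (N !).factorization p :=
  calc N / p ≤ (p * (N / p))!.factorization p := by
        rw [Nat.factorization_factorial_mul hp]; omega
    _ ≤ (N !).factorization p :=
        (Nat.factorization_le_iff_dvd (Nat.factorial_ne_zero _) (Nat.factorial_ne_zero _)).2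
          (Nat.factorial_dvd_factorial (Nat.mul_div_le N p)) p

lemma log_factorial_eq_sum_primesLE (N : ℕ) :
    log (N ! : ℕ) = ∑ p ∈ Nat.primesLE N, (N !).factorization p * log p := by
  rw [log_nat_eq_sum_factorization]
  refine Finsupp.sum_of_support_subset _ (fun p hp => ?_) _ (fun p _ => by simp)
  rw [Nat.support_factorization] at hp
  have hp' := Nat.prime_of_mem_primeFactors hp
  simpa [Nat.primesLE, Nat.mem_primesBelow, hp', Nat.lt_succ_iff] using
    (hp'.dvd_factorial).1 (Nat.dvd_of_mem_primeFactors hp)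

theorem sum_primesLE_log_div_le (N : ℕ) :
    ∑ p ∈ Nat.primesLE N, log p / p ≤ log N + log 4 := by
  rcases Nat.eq_zero_or_pos N with rfl | hN
  · simp [Nat.primesLE_zero]; positivity
  have hNR : (0 : ℝ) < N := by exact_mod_cast hN
  have hterm : ∀ p ∈ Nat.primesLE N, N * (log p / p) ≤ (N !).factorization p * log p + log p := by
    intro p hp
    have hp' := Nat.prime_of_mem_primesBelow hp
    have hfloor : (N : ℝ) / p ≤ (N / p : ℕ) + 1 := by
      have := Nat.lt_floor_add_one ((N : ℝ) / p)
      rw [Nat.floor_div_eq_div] at this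
      exact this.le
    have hleg : ((N / p : ℕ) : ℝ) ≤ (N !).factorization p := by
      exact_mod_cast div_le_factorization_factorial hp' N
    calc N * (log p / p) = (N : ℝ) / p * log p := by ring
      _ ≤ ((N / p : ℕ) + 1) * log p := by gcongr
      _ ≤ ((N !).factorization p + 1) * log p := by gcongr
      _ = _ := by ring
  have htheta : ∑ p ∈ Nat.primesLE N, log p ≤ log 4 * N := by
    rw [← Chebyshev.theta_eq_sum_primesLE_log]
    exact Chebyshev.theta_le_log4_mul_x hNR.le
  have hfact : log (N ! : ℕ) ≤ N * log N := by
    rw [← log_pow]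
    exact log_le_log (by exact_mod_cast N.factorial_pos) (by exact_mod_cast N.factorial_le_pow)
  have hmul : N * ∑ p ∈ Nat.primesLE N, log p / p ≤ N * (log N + log 4) :=
    calc N * ∑ p ∈ Nat.primesLE N, log p / p
        ≤ ∑ p ∈ Nat.primesLE N, ((N !).factorization p * log p + log p) := by
          rw [mul_sum]; exact sum_le_sum hterm
      _ ≤ N * log N + log 4 * N := by
          rw [sum_add_distrib, ← log_factorial_eq_sum_primesLE]; exact add_le_add hfact htheta
      _ = N * (log N + log 4) := by ring
  exact le_of_mul_le_mul_left hmul hNR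

lemma sum_range_mul_le_of_antitone {c b B : ℕ → ℝ} (N : ℕ) (hb : Antitone b) (hbN : 0 ≤ b N)
    (hB : ∀ n, ∑ i ∈ range (n + 1), c i ≤ B n) :
    ∑ i ∈ range (N + 1), c i * b i ≤ B N * b N + ∑ i ∈ range N, B i * (b i - b (i + 1)) := by
  have habel := sum_range_by_parts b c (N + 1)
  simp only [smul_eq_mul, Nat.add_sub_cancel] at habel
  rw [mul_comm] at habel
  simp_rw [mul_comm (c _)]
  rw [habel, sub_eq_add_neg, ← sum_neg_distrib]
  gcongr with i hi
  · exact hB N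
  · rw [← neg_mul, neg_sub, mul_comm (B i)]
    exact mul_le_mul_of_nonneg_left (hB i) (sub_nonneg.2 (hb (Nat.le_succ i)))

lemma add_mul_inv_sub_inv_le {u v : ℝ} (L : ℝ) (hu : 0 < u) (huv : u ≤ v) :
    (u + L) * (u⁻¹ - v⁻¹) ≤ (log v - log u) + (L / u - L / v) := by
  have hv : 0 < v := hu.trans_le huv
  have h := one_sub_inv_le_log_of_pos (div_pos hv hu)
  rw [log_div hv.ne' hu.ne', inv_div] at h
  have : (u + L) * (u⁻¹ - v⁻¹) = (1 - u / v) + (L / u - L / v) := by field_simp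
  linarith

-- `log` is clamped at `2` so that the weights `(log (max n 2))⁻¹` are positive and antitone on all
-- of `ℕ`, as partial summation requires.
lemma sum_range_div_log_le {c : ℕ → ℝ} {L : ℝ}
    (hc : ∀ n, ∑ i ∈ range (n + 1), c i ≤ log (max n 2) + L) (N : ℕ) :
    ∑ i ∈ range (N + 1), c i / log (max i 2)
      ≤ log (log (max N 2)) + 1 + L / log 2 - log (log 2) := by
  set ℓ : ℕ → ℝ := fun n => log (max n 2) with hℓ
  have hℓpos : ∀ n, 0 < ℓ n := fun n =>
    (log_pos one_lt_two).trans_le (log_le_log two_pos (le_max_right _ _))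
  have hℓmono : Monotone ℓ := fun m n h =>
    log_le_log (by positivity) (max_le_max (by exact_mod_cast h) le_rfl)
  set F : ℕ → ℝ := fun n => log (ℓ n) - L / ℓ n with hF
  have hstep : ∀ n, (ℓ n + L) * ((ℓ n)⁻¹ - (ℓ (n + 1))⁻¹) ≤ F (n + 1) - F n := fun n => by
    have := add_mul_inv_sub_inv_le L (hℓpos n) (hℓmono (Nat.le_succ n))
    simp only [hF]
    linarith
  simp only [div_eq_mul_inv]
  refine (sum_range_mul_le_of_antitone N (fun m n h => inv_anti₀ (hℓpos m) (hℓmono h))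
    (inv_nonneg.2 (hℓpos N).le) hc).trans ?_
  refine (add_le_add_right (sum_le_sum fun n _ => hstep n) _).trans (le_of_eq ?_)
  have hℓ0 : ℓ 0 = log 2 := by simp [hℓ]
  have hℓN : ℓ N ≠ 0 := (hℓpos N).ne'
  rw [sum_range_sub, hF]
  simp only [hℓ0]
  field_simp
  ring

theorem sum_primesLE_inv_le {N : ℕ} (hN : 2 ≤ N) :
    ∑ p ∈ Nat.primesLE N, (p : ℝ)⁻¹ ≤ log (log N) + 3 - log (log 2) := by
  have hmax : ∀ {n : ℕ}, 2 ≤ n → max (n : ℝ) 2 = n := fun hn => max_eq_left (by exact_mod_cast hn)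
  have hsum : ∑ p ∈ Nat.primesLE N, (p : ℝ)⁻¹
      = ∑ n ∈ range (N + 1), (if n.Prime then log n / n else 0) / log (max n 2) := by
    rw [Nat.primesLE_eq_filter_range, sum_filter]
    refine sum_congr rfl fun n _ => ?_
    split_ifs with hn
    · have hlog : log n ≠ 0 := (log_pos (by exact_mod_cast hn.one_lt)).ne'
      rw [hmax hn.two_le]
      field_simp
    · simp
  have hpartial : ∀ n, ∑ i ∈ range (n + 1), (if i.Prime then log i / i else 0)
      ≤ log (max n 2) + log 4 := fun n => by
    rw [← sum_filter, ← Nat.primesLE_eq_filter_range]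
    refine (sum_primesLE_log_div_le n).trans ((add_le_add_iff_right _).2 ?_)
    rcases Nat.eq_zero_or_pos n with rfl | hn
    · simpa using log_nonneg one_le_two
    · exact log_le_log (by exact_mod_cast hn) (le_max_left _ _)
  have hlog4 : log 4 / log 2 = 2 := by
    rw [show (4 : ℝ) = 2 ^ 2 by norm_num, log_pow]
    field_simp [(log_pos one_lt_two).ne']
    norm_num
  rw [hsum]
  refine (sum_range_div_log_le hpartial N).trans (le_of_eq ?_)
  rw [hmax hN, hlog4]
  ring

lemma inv_sub_two_le {x : ℝ} (hx : 3 ≤ x) : (x - 2)⁻¹ ≤ x⁻¹ + 6 * (x ^ 2)⁻¹ := by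
  have h2 : 0 < x - 2 := by linarith
  rw [inv_le_iff_one_le_mul₀' h2]
  field_simp
  nlinarith

theorem prod_primesLE_erase_two_le {N : ℕ} (hN : 2 ≤ N) :
    ∏ p ∈ (Nat.primesLE N).erase 2, (1 + ((p : ℝ) - 2)⁻¹)
      ≤ exp (15 - log (log 2)) * log N := by
  have h3 : ∀ p ∈ (Nat.primesLE N).erase 2, (3 : ℝ) ≤ p := fun p hp => by
    exact_mod_cast (prime_and_three_le_of_mem_primesLE_erase_two hp).2
  have hsum : ∑ p ∈ (Nat.primesLE N).erase 2, ((p : ℝ) - 2)⁻¹ ≤ log (log N) + 15 - log (log 2) :=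
    calc ∑ p ∈ (Nat.primesLE N).erase 2, ((p : ℝ) - 2)⁻¹
        ≤ ∑ p ∈ (Nat.primesLE N).erase 2, ((p : ℝ)⁻¹ + 6 * ((p : ℝ) ^ 2)⁻¹) :=
          sum_le_sum fun p hp => inv_sub_two_le (h3 p hp)
      _ ≤ ∑ p ∈ Nat.primesLE N, (p : ℝ)⁻¹ + 6 * ∑ i ∈ Ioo 0 (N + 1), ((i : ℝ) ^ 2)⁻¹ := by
          rw [sum_add_distrib, ← mul_sum]
          gcongr
          · exact erase_subset _ _
          · intro p hp
            exact mem_Ioo.2 ⟨(Nat.prime_of_mem_primesBelow (mem_of_mem_erase hp)).pos,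
              Nat.lt_of_mem_primesBelow (mem_of_mem_erase hp)⟩
      _ ≤ (log (log N) + 3 - log (log 2)) + 6 * 2 := by
          gcongr
          · exact sum_primesLE_inv_le hN
          · simpa using sum_Ioo_inv_sq_le (α := ℝ) 0 (N + 1)
      _ = log (log N) + 15 - log (log 2) := by ring
  have hlogN : 0 < log N := log_pos (by exact_mod_cast hN)
  calc ∏ p ∈ (Nat.primesLE N).erase 2, (1 + ((p : ℝ) - 2)⁻¹)
      ≤ ∏ p ∈ (Nat.primesLE N).erase 2, exp (((p : ℝ) - 2)⁻¹) := by
        refine prod_le_prod (fun p hp => (one_add_inv_sub_two_pos (by linarith [h3 p hp])).le)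
          fun p _ => by rw [add_comm]; exact add_one_le_exp _
    _ = exp (∑ p ∈ (Nat.primesLE N).erase 2, ((p : ℝ) - 2)⁻¹) := (exp_sum _ _).symm
    _ ≤ exp (log (log N) + 15 - log (log 2)) := exp_le_exp.2 hsum
    _ = exp (15 - log (log 2)) * log N := by
        rw [show log (log N) + 15 - log (log 2) = (15 - log (log 2)) + log (log N) by ring,
          exp_add, exp_log hlogN]

lemma sum_Ioc_filter_dvd {d : ℕ} (hd : 0 < d) (M : ℕ) (f : ℕ → ℝ) :
    ∑ m ∈ Ioc 0 M with d ∣ m, f m = ∑ m ∈ Ioc 0 (M / d), f (d * m) := by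
  symm
  refine sum_nbij' (d * ·) (· / d) (fun m hm => ?_) (fun m hm => ?_) (fun m _ => ?_)
    (fun m hm => ?_) (fun _ _ => rfl)
  · simp only [mem_filter, mem_Ioc, Nat.le_div_iff_mul_le hd] at hm ⊢
    exact ⟨⟨Nat.mul_pos hd hm.1, by linarith [mul_comm d m]⟩, dvd_mul_right d m⟩
  · simp only [mem_filter, mem_Ioc] at hm ⊢
    obtain ⟨⟨h0, hM⟩, k, rfl⟩ := hm
    rw [Nat.mul_div_cancel_left _ hd, Nat.le_div_iff_mul_le hd]
    exact ⟨Nat.pos_of_mul_pos_left h0, by linarith [mul_comm d k]⟩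
  · exact Nat.mul_div_cancel_left _ hd
  · exact Nat.mul_div_cancel' (mem_filter.1 hm).2

lemma two_pow_min_eq (v K : ℕ) :
    (2 : ℝ) ^ min v K = 1 + ∑ i ∈ range K, if i < v then (2 : ℝ) ^ i else 0 := by
  induction K with
  | zero => simp
  | succ K ih =>
    rw [sum_range_succ, ← add_assoc, ← ih]
    rcases lt_or_ge K v with h | h
    · rw [min_eq_right h.le, min_eq_right h, if_pos h, pow_succ]; ring
    · rw [min_eq_left h, min_eq_left (h.trans K.le_succ), if_neg h.not_gt, add_zero]

lemma sum_range_two_pow_div_pow_le {x : ℝ} (hx : 2 < x) (K : ℕ) :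
    ∑ i ∈ range K, (2 : ℝ) ^ i / x ^ (i + 1) ≤ (x - 2)⁻¹ := by
  have hx0 : 0 < x := by linarith
  calc ∑ i ∈ range K, (2 : ℝ) ^ i / x ^ (i + 1) = x⁻¹ * ∑ i ∈ Ico 0 K, (2 / x) ^ i := by
        rw [← range_eq_Ico, mul_sum]
        exact sum_congr rfl fun i _ => by rw [div_pow, pow_succ]; field_simp
    _ ≤ x⁻¹ * ((2 / x) ^ 0 / (1 - 2 / x)) := by
        gcongr
        exact geom_sum_Ico_le_of_lt_one (by positivity) ((div_lt_one hx0).2 hx)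
    _ = (x - 2)⁻¹ := by
        have : x - 2 ≠ 0 := by linarith
        field_simp

def cardFactorsIn (Q : Finset ℕ) (n : ℕ) : ℕ := ∑ p ∈ Q, n.factorization p

section cardFactorsIn

variable {Q : Finset ℕ} {p : ℕ}

lemma cardFactorsIn_mul {a b : ℕ} (ha : a ≠ 0) (hb : b ≠ 0) :
    cardFactorsIn Q (a * b) = cardFactorsIn Q a + cardFactorsIn Q b := by
  simp [cardFactorsIn, Nat.factorization_mul ha hb, sum_add_distrib]

lemma cardFactorsIn_prime_pow (hp : p.Prime) (hpQ : p ∉ Q) (j : ℕ) :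
    cardFactorsIn Q (p ^ j) = 0 :=
  sum_eq_zero fun q hq => by
    rw [hp.factorization_pow, Finsupp.single_apply, if_neg (ne_of_mem_of_not_mem hq hpQ).symm]

lemma cardFactorsIn_prime_pow_mul (hp : p.Prime) (hpQ : p ∉ Q) (j : ℕ) {m : ℕ} (hm : m ≠ 0) :
    cardFactorsIn Q (p ^ j * m) = cardFactorsIn Q m := by
  rw [cardFactorsIn_mul (pow_ne_zero _ hp.ne_zero) hm, cardFactorsIn_prime_pow hp hpQ, zero_add]

lemma cardFactorsIn_insert (hpQ : p ∉ Q) (n : ℕ) :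
    cardFactorsIn (insert p Q) n = n.factorization p + cardFactorsIn Q n :=
  sum_insert hpQ

lemma BigOmegaBelow_eq_cardFactorsIn {y : ℝ} (hy : 0 ≤ y) (n : ℕ) :
    BigOmegaBelow n y = cardFactorsIn (Nat.primesLE ⌊y⌋₊) n := by
  refine sum_subset (fun p hp => ?_) (fun p hp hpn => ?_)
  · rw [mem_filter] at hp
    exact (mem_primesLE_floor_iff hy).2 ⟨Nat.prime_of_mem_primeFactors hp.1, hp.2⟩
  · rw [← Finsupp.notMem_support_iff, Nat.support_factorization]
    exact fun h => hpn (mem_filter.2 ⟨h, ((mem_primesLE_floor_iff hy).1 hp).2⟩)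

lemma BigOmegaBelow_eq_factorization_two_add {y : ℝ} (hy : 2 ≤ y) (n : ℕ) :
    BigOmegaBelow n y = n.factorization 2 + cardFactorsIn ((Nat.primesLE ⌊y⌋₊).erase 2) n := by
  have h2 : 2 ∈ Nat.primesLE ⌊y⌋₊ :=
    (mem_primesLE_floor_iff (by linarith)).2 ⟨Nat.prime_two, by exact_mod_cast hy⟩
  rw [BigOmegaBelow_eq_cardFactorsIn (by linarith), cardFactorsIn, cardFactorsIn,
    add_sum_erase _ _ h2]

lemma sum_two_pow_min_factorization_mul_eq (hp : p.Prime) (hpQ : p ∉ Q) (K M : ℕ) :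
    ∑ m ∈ Ioc 0 M, (2 : ℝ) ^ min (m.factorization p) K * 2 ^ cardFactorsIn Q m
      = ∑ m ∈ Ioc 0 M, (2 : ℝ) ^ cardFactorsIn Q m
        + ∑ i ∈ range K, 2 ^ i * ∑ m ∈ Ioc 0 (M / p ^ (i + 1)), (2 : ℝ) ^ cardFactorsIn Q m := by
  have hdvd : ∀ m ∈ Ioc 0 M, ∀ i, i < m.factorization p ↔ p ^ (i + 1) ∣ m := fun m hm i => by
    rw [hp.pow_dvd_iff_le_factorization (mem_Ioc.1 hm).1.ne', Nat.succ_le_iff]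
  have hmultiples : ∀ i, ∑ m ∈ Ioc 0 M with p ^ (i + 1) ∣ m, (2 : ℝ) ^ cardFactorsIn Q m
      = ∑ m ∈ Ioc 0 (M / p ^ (i + 1)), (2 : ℝ) ^ cardFactorsIn Q m := fun i => by
    rw [sum_Ioc_filter_dvd (pow_pos hp.pos _)]
    exact sum_congr rfl fun m hm => by
      rw [cardFactorsIn_prime_pow_mul hp hpQ _ (mem_Ioc.1 hm).1.ne']
  calc ∑ m ∈ Ioc 0 M, (2 : ℝ) ^ min (m.factorization p) K * 2 ^ cardFactorsIn Q m
      = ∑ m ∈ Ioc 0 M, (1 + ∑ i ∈ range K, if p ^ (i + 1) ∣ m then (2 : ℝ) ^ i else 0)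
          * 2 ^ cardFactorsIn Q m :=
        sum_congr rfl fun m hm => by
          simp only [two_pow_min_eq, hdvd m hm]
    _ = _ := by
        simp only [add_mul, sum_add_distrib, one_mul, sum_mul, ite_mul, zero_mul]
        rw [sum_comm]
        simp only [← sum_filter, ← mul_sum, hmultiples]

lemma sum_two_pow_min_factorization_mul_le (hp : p.Prime) (hpQ : p ∉ Q) {c : ℝ}
    (hc : ∀ M : ℕ, ∑ m ∈ Ioc 0 M, (2 : ℝ) ^ cardFactorsIn Q m ≤ c * M) (K M : ℕ) :
    ∑ m ∈ Ioc 0 M, (2 : ℝ) ^ min (m.factorization p) K * 2 ^ cardFactorsIn Q m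
      ≤ c * M * (1 + ∑ i ∈ range K, (2 : ℝ) ^ i / p ^ (i + 1)) := by
  have hc0 : 0 ≤ c := zero_le_one.trans (by simpa [cardFactorsIn] using hc 1)
  rw [sum_two_pow_min_factorization_mul_eq hp hpQ, mul_add, mul_one, mul_sum]
  refine add_le_add (hc M) (sum_le_sum fun i _ => ?_)
  calc (2 : ℝ) ^ i * ∑ m ∈ Ioc 0 (M / p ^ (i + 1)), (2 : ℝ) ^ cardFactorsIn Q m
      ≤ 2 ^ i * (c * ((M / p ^ (i + 1) : ℕ) : ℝ)) := by gcongr; exact hc _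
    _ ≤ 2 ^ i * (c * (M / p ^ (i + 1) : ℝ)) := by
        gcongr
        exact_mod_cast Nat.cast_div_le (α := ℝ) (m := M) (n := p ^ (i + 1))
    _ = c * M * (2 ^ i / p ^ (i + 1)) := by ring

theorem sum_two_pow_cardFactorsIn_le (hQ : ∀ p ∈ Q, p.Prime ∧ 3 ≤ p) (M : ℕ) :
    ∑ m ∈ Ioc 0 M, (2 : ℝ) ^ cardFactorsIn Q m ≤ (∏ p ∈ Q, (1 + ((p : ℝ) - 2)⁻¹)) * M := by
  induction Q using Finset.induction_on generalizing M with
  | empty => simp [cardFactorsIn]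
  | insert p Q hpQ ih =>
    obtain ⟨hp, hp3⟩ := hQ p (mem_insert_self p Q)
    have ih := ih (fun q hq => hQ q (mem_insert_of_mem hq))
    have hmin : ∀ m ∈ Ioc 0 M, min (m.factorization p) M = m.factorization p := fun m hm =>
      min_eq_left ((Nat.factorization_lt p (mem_Ioc.1 hm).1.ne').le.trans (mem_Ioc.1 hm).2)
    have hp2 : (2 : ℝ) < p := by exact_mod_cast hp3
    calc ∑ m ∈ Ioc 0 M, (2 : ℝ) ^ cardFactorsIn (insert p Q) m
        = ∑ m ∈ Ioc 0 M, (2 : ℝ) ^ min (m.factorization p) M * 2 ^ cardFactorsIn Q m :=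
          sum_congr rfl fun m hm => by rw [hmin m hm, cardFactorsIn_insert hpQ, pow_add]
      _ ≤ (∏ q ∈ Q, (1 + ((q : ℝ) - 2)⁻¹)) * M * (1 + ((p : ℝ) - 2)⁻¹) := by
          refine (sum_two_pow_min_factorization_mul_le hp hpQ ih M M).trans ?_
          have : 0 ≤ ∏ q ∈ Q, (1 + ((q : ℝ) - 2)⁻¹) := prod_nonneg fun q hq =>
            (one_add_inv_sub_two_pos (by exact_mod_cast (hQ q (mem_insert_of_mem hq)).2)).le
          gcongr
          exact sum_range_two_pow_div_pow_le hp2 M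
      _ = (∏ q ∈ insert p Q, (1 + ((q : ℝ) - 2)⁻¹)) * M := by rw [prod_insert hpQ]; ring

end cardFactorsIn

lemma card_filter_mul_pow_le_sum {α : Type*} {s : Finset α} {P : α → Prop} [DecidablePred P]
    {r : ℝ} (hr : 1 ≤ r) (f : α → ℕ) {k : ℕ} (h : ∀ a ∈ s, P a → k ≤ f a) :
    (#{a ∈ s | P a} : ℝ) * r ^ k ≤ ∑ a ∈ s, r ^ f a :=
  calc (#{a ∈ s | P a} : ℝ) * r ^ k = ∑ a ∈ s with P a, r ^ k := by simp
    _ ≤ ∑ a ∈ s with P a, r ^ f a :=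
        sum_le_sum fun a ha => pow_le_pow_right₀ hr (h a (mem_filter.1 ha).1 (mem_filter.1 ha).2)
    _ ≤ ∑ a ∈ s, r ^ f a :=
        sum_le_sum_of_subset_of_nonneg (filter_subset _ _) fun _ _ _ => by positivity

lemma setOf_le_and_le_BigOmegaBelow_eq {x y : ℝ} (hx : 0 ≤ x) {k : ℕ} (hk : 1 ≤ k) :
    {n : ℕ | (n : ℝ) ≤ x ∧ k ≤ BigOmegaBelow n y} = ↑{n ∈ Ioc 0 ⌊x⌋₊ | k ≤ BigOmegaBelow n y} := by
  ext n
  simp only [coe_filter, mem_Ioc, Set.mem_ofPred_eq, Nat.le_floor_iff hx]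
  refine ⟨fun h => ⟨⟨Nat.pos_of_ne_zero ?_, h.1⟩, h.2⟩, fun h => ⟨h.1.2, h.2⟩⟩
  rintro rfl
  simp [BigOmegaBelow] at h
  omega

theorem card_filter_le_BigOmegaBelow_mul_two_pow_le {y : ℝ} (hy : 2 ≤ y) (k N : ℕ) :
    (#{n ∈ Ioc 0 N | k ≤ BigOmegaBelow n y} : ℝ) * 2 ^ k
      ≤ exp (15 - log (log 2)) * log y * N * (1 + k / 2) := by
  set Q := (Nat.primesLE ⌊y⌋₊).erase 2
  have hΩ : ∀ n, BigOmegaBelow n y = n.factorization 2 + cardFactorsIn Q n :=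
    BigOmegaBelow_eq_factorization_two_add hy
  have hy2 : 2 ≤ ⌊y⌋₊ := Nat.le_floor (by exact_mod_cast hy)
  have hQ : ∏ p ∈ Q, (1 + ((p : ℝ) - 2)⁻¹) ≤ exp (15 - log (log 2)) * log y :=
    (prod_primesLE_erase_two_le hy2).trans <| by
      gcongr
      exact Nat.floor_le (by linarith)
  calc (#{n ∈ Ioc 0 N | k ≤ BigOmegaBelow n y} : ℝ) * 2 ^ k
      ≤ ∑ n ∈ Ioc 0 N, (2 : ℝ) ^ (min (n.factorization 2) k + cardFactorsIn Q n) :=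
        card_filter_mul_pow_le_sum one_le_two _ fun n _ hn => by
          rw [hΩ] at hn
          omega
    _ = ∑ n ∈ Ioc 0 N, (2 : ℝ) ^ min (n.factorization 2) k * 2 ^ cardFactorsIn Q n := by
        simp only [pow_add]
    _ ≤ (∏ p ∈ Q, (1 + ((p : ℝ) - 2)⁻¹)) * N
          * (1 + ∑ i ∈ range k, (2 : ℝ) ^ i / ((2 : ℕ) : ℝ) ^ (i + 1)) :=
        sum_two_pow_min_factorization_mul_le Nat.prime_two (notMem_erase 2 _)
          (sum_two_pow_cardFactorsIn_le fun _ hp =>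
            prime_and_three_le_of_mem_primesLE_erase_two hp) k N
    _ = (∏ p ∈ Q, (1 + ((p : ℝ) - 2)⁻¹)) * N * (1 + k / 2) := by
        have h : ∀ i, (2 : ℝ) ^ i / ((2 : ℕ) : ℝ) ^ (i + 1) = 1 / 2 := fun i => by
          rw [Nat.cast_ofNat, pow_succ]; field_simp
        simp only [h, sum_const, card_range, nsmul_eq_mul]
        ring
    _ ≤ exp (15 - log (log 2)) * log y * N * (1 + k / 2) := by gcongr

/-- There is `C > 0` such that for all `x, y ≥ 2` and integers `k ≥ 1`, the number of
`n ≤ x` with `Ω(n; y) ≥ k` is at most `C (k/2^k) x log y`. -/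
theorem count_large_BigOmegaBelow :
    ∃ C : ℝ, 0 < C ∧ ∀ x y : ℝ, ∀ k : ℕ, 2 ≤ x → 2 ≤ y → 1 ≤ k →
      ({n : ℕ | (n : ℝ) ≤ x ∧ k ≤ BigOmegaBelow n y}.ncard : ℝ)
        ≤ C * ((k : ℝ) / 2 ^ k) * x * Real.log y := by
  refine ⟨3 / 2 * exp (15 - log (log 2)), by positivity, fun x y k hx hy hk => ?_⟩
  rw [setOf_le_and_le_BigOmegaBelow_eq (by linarith) hk, Set.ncard_coe_finset]
  have hcount := card_filter_le_BigOmegaBelow_mul_two_pow_le hy k ⌊x⌋₊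
  rw [← le_div_iff₀ (by positivity)] at hcount
  have hlogy : 0 ≤ log y := log_nonneg (by linarith)
  have hk' : 1 + (k : ℝ) / 2 ≤ 3 / 2 * k := by
    have : (1 : ℝ) ≤ k := by exact_mod_cast hk
    linarith
  calc _ ≤ exp (15 - log (log 2)) * log y * ⌊x⌋₊ * (1 + k / 2) / 2 ^ k := hcount
    _ ≤ exp (15 - log (log 2)) * log y * x * (3 / 2 * k) / 2 ^ k := by
        gcongr
        exact Nat.floor_le (by linarith)
    _ = 3 / 2 * exp (15 - log (log 2)) * ((k : ℝ) / 2 ^ k) * x * log y := by ring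
end

section
/- Fix an integer a > 1. For natural numbers d and e with d ∣ e, the integer φ(d)/ℓ*_a(d) divides the integer φ(e)/ℓ*_a(e). Here ℓ*_a(n) divides φ(n) for every n, so both ratios are integers. -/
/-- `coprimePart a n` is `n_{(a)}`, the largest divisor of `n` coprime to `a`. -/
def coprimePart (a n : ℕ) : ℕ :=
  ∏ p ∈ n.primeFactors.filter (fun p => ¬ p ∣ a), p ^ n.factorization p

/-- `genOrder a n` is `ℓ*_a(n)`, the multiplicative order of `a` modulo `n_{(a)}`. -/
noncomputable def genOrder (a n : ℕ) : ℕ := orderOf (a : ZMod (coprimePart a n))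

/-- The complementary part: the product over primes dividing `a`. -/
def aPart (a n : ℕ) : ℕ :=
  ∏ p ∈ n.primeFactors.filter (fun p => p ∣ a), p ^ n.factorization p

lemma coprimePart_pos (a n : ℕ) : 0 < coprimePart a n := by
  apply Finset.prod_pos
  intro p hp
  exact pow_pos (Nat.pos_of_mem_primeFactors (Finset.mem_filter.mp hp).1) _

lemma aPart_mul_coprimePart (a n : ℕ) (hn : n ≠ 0) : aPart a n * coprimePart a n = n := by
  rw [aPart, coprimePart, Finset.prod_filter_mul_prod_filter_not]
  conv_rhs => rw [← Nat.factorization_prod_pow_eq_self hn]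
  rfl

lemma coprime_aPart_coprimePart (a n : ℕ) : Nat.Coprime (aPart a n) (coprimePart a n) := by
  apply Nat.Coprime.prod_left
  intro p hp
  apply Nat.Coprime.prod_right
  intro q hq
  rw [Finset.mem_filter] at hp hq
  apply Nat.Coprime.pow
  refine (Nat.coprime_primes (Nat.prime_of_mem_primeFactors hp.1)
    (Nat.prime_of_mem_primeFactors hq.1)).mpr ?_
  rintro rfl
  exact hq.2 hp.2

lemma coprime_coprimePart (a n : ℕ) : Nat.Coprime a (coprimePart a n) := by
  apply Nat.Coprime.prod_right
  intro q hq
  rw [Finset.mem_filter] at hq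
  exact Nat.Coprime.pow_right _
    (((Nat.prime_of_mem_primeFactors hq.1).coprime_iff_not_dvd).mpr hq.2).symm

lemma filteredPart_dvd (P : ℕ → Prop) [DecidablePred P] (n : ℕ) :
    ∏ p ∈ n.primeFactors.filter (fun p => P p), p ^ n.factorization p ∣ n := by
  rcases eq_or_ne n 0 with rfl | hn
  · simp
  · calc ∏ p ∈ n.primeFactors.filter (fun p => P p), p ^ n.factorization p
        ∣ ∏ p ∈ n.primeFactors, p ^ n.factorization p :=
          Finset.prod_dvd_prod_of_subset _ _ _ (Finset.filter_subset _ _)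
      _ = n := by
          conv_rhs => rw [← Nat.factorization_prod_pow_eq_self hn]
          rfl

lemma coprimePart_dvd (a n : ℕ) : coprimePart a n ∣ n := filteredPart_dvd _ n

lemma filteredPart_dvd_mono (P : ℕ → Prop) [DecidablePred P] {d e : ℕ} (he : e ≠ 0)
    (hde : d ∣ e) :
    ∏ p ∈ d.primeFactors.filter (fun p => P p), p ^ d.factorization p ∣
      ∏ p ∈ e.primeFactors.filter (fun p => P p), p ^ e.factorization p := by
  have hd : d ≠ 0 := fun h => by subst h; exact he (Nat.eq_zero_of_zero_dvd hde)
  have hsub : d.primeFactors.filter (fun p => P p) ⊆ e.primeFactors.filter (fun p => P p) :=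
    Finset.filter_subset_filter _ (Nat.primeFactors_mono hde he)
  calc ∏ p ∈ d.primeFactors.filter (fun p => P p), p ^ d.factorization p
      ∣ ∏ p ∈ d.primeFactors.filter (fun p => P p), p ^ e.factorization p := by
        apply Finset.prod_dvd_prod_of_dvd
        intro p _
        exact pow_dvd_pow p ((Nat.factorization_le_iff_dvd hd he).mpr hde p)
    _ ∣ ∏ p ∈ e.primeFactors.filter (fun p => P p), p ^ e.factorization p :=
        Finset.prod_dvd_prod_of_subset _ _ _ hsub

lemma orderOf_dvd_totient_coprimePart (a n : ℕ) :
    genOrder a n ∣ Nat.totient (coprimePart a n) := by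
  have hpos : 0 < coprimePart a n := coprimePart_pos a n
  haveI : NeZero (coprimePart a n) := ⟨hpos.ne'⟩
  apply orderOf_dvd_of_pow_eq_one
  have h := ZMod.pow_totient (ZMod.unitOfCoprime a (coprime_coprimePart a n))
  have := congrArg (Units.val) h
  push_cast at this
  simpa [ZMod.coe_unitOfCoprime] using this

lemma genOrder_dvd_totient (a n : ℕ) : genOrder a n ∣ Nat.totient n := by
  rcases eq_or_ne n 0 with rfl | hn
  · simp
  · exact (orderOf_dvd_totient_coprimePart a n).trans
      (Nat.totient_dvd_of_dvd (coprimePart_dvd a n))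

/-- Key group-theoretic step: for `m ∣ M` both coprime to `a`,
`φ m / ord_m(a) ∣ φ M / ord_M(a)`. -/
lemma totient_div_orderOf_dvd (a m M : ℕ) (hm : 0 < m) (hM : 0 < M) (hmM : m ∣ M)
    (ham : Nat.Coprime a m) (haM : Nat.Coprime a M) :
    Nat.totient m / orderOf (a : ZMod m) ∣ Nat.totient M / orderOf (a : ZMod M) := by
  haveI : NeZero m := ⟨hm.ne'⟩
  haveI : NeZero M := ⟨hM.ne'⟩
  set u : (ZMod M)ˣ := ZMod.unitOfCoprime a haM with hu
  set v : (ZMod m)ˣ := ZMod.unitOfCoprime a ham with hv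
  set f : (ZMod M)ˣ →* (ZMod m)ˣ := ZMod.unitsMap hmM with hf
  have hfu : f u = v := by
    ext
    simp [hf, hv, hu, ZMod.unitsMap, ZMod.coe_unitOfCoprime]
  have hle : Subgroup.zpowers u ≤ (Subgroup.zpowers v).comap f := by
    rw [Subgroup.zpowers_le]
    simp only [Subgroup.mem_comap, hfu]
    exact Subgroup.mem_zpowers v
  set F := QuotientGroup.map (Subgroup.zpowers u) (Subgroup.zpowers v) f hle with hF
  have hsurj : Function.Surjective F := by
    intro y
    obtain ⟨x, rfl⟩ := QuotientGroup.mk_surjective y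
    obtain ⟨g, hg⟩ := ZMod.unitsMap_surjective hmM x
    exact ⟨QuotientGroup.mk g, by rw [hF, QuotientGroup.map_mk, hg]⟩
  have hcard := Subgroup.card_dvd_of_surjective F hsurj
  have cardQ : ∀ (N : ℕ) [NeZero N] (w : (ZMod N)ˣ) (hw : (w : ZMod N) = (a : ZMod N)),
      Nat.card ((ZMod N)ˣ ⧸ Subgroup.zpowers w)
        = Nat.totient N / orderOf (a : ZMod N) := by
    intro N _ w hw
    have h1 : Nat.card (ZMod N)ˣ
        = Nat.card ((ZMod N)ˣ ⧸ Subgroup.zpowers w) * Nat.card (Subgroup.zpowers w) :=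
      Subgroup.card_eq_card_quotient_mul_card_subgroup _
    have h2 : Nat.card (Subgroup.zpowers w) = orderOf (a : ZMod N) := by
      rw [Nat.card_zpowers, ← hw, orderOf_units]
    have h3 : Nat.card (ZMod N)ˣ = Nat.totient N := by
      rw [Nat.card_eq_fintype_card, ZMod.card_units_eq_totient]
    have hopos : 0 < orderOf (a : ZMod N) := by
      rw [← hw, orderOf_units]
      exact orderOf_pos w
    rw [h3, h2] at h1
    rw [h1, Nat.mul_div_cancel _ hopos]
  have e1 := cardQ M u (ZMod.coe_unitOfCoprime a haM)
  have e2 := cardQ m v (ZMod.coe_unitOfCoprime a ham)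
  rw [e1, e2] at hcard
  exact hcard

/-- For a fixed integer `a > 1` and `d ∣ e`, the integer `φ(d)/ℓ*_a(d)` divides
`φ(e)/ℓ*_a(e)`; the generalized order `ℓ*_a(n)` divides `φ(n)`, so both ratios
are integers. -/
theorem genOrder_ratio_dvd (a : ℕ) (ha : 1 < a) (d e : ℕ) (hde : d ∣ e) :
    genOrder a d ∣ Nat.totient d ∧ genOrder a e ∣ Nat.totient e ∧
      (Nat.totient d / genOrder a d) ∣ (Nat.totient e / genOrder a e) := by
  refine ⟨genOrder_dvd_totient a d, genOrder_dvd_totient a e, ?_⟩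
  rcases eq_or_ne e 0 with rfl | he
  · simp
  have hd : d ≠ 0 := fun h => by subst h; exact he (Nat.eq_zero_of_zero_dvd hde)
  -- split totients
  have hsplit : ∀ n : ℕ, n ≠ 0 →
      Nat.totient n = Nat.totient (aPart a n) * Nat.totient (coprimePart a n) := by
    intro n hn
    conv_lhs => rw [← aPart_mul_coprimePart a n hn]
    exact Nat.totient_mul (coprime_aPart_coprimePart a n)
  have hratio : ∀ n : ℕ, n ≠ 0 → Nat.totient n / genOrder a n
      = Nat.totient (aPart a n) * (Nat.totient (coprimePart a n) / genOrder a n) := by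
    intro n hn
    rw [hsplit n hn, Nat.mul_div_assoc _ (orderOf_dvd_totient_coprimePart a n)]
  rw [hratio d hd, hratio e he]
  apply mul_dvd_mul
  · exact Nat.totient_dvd_of_dvd (filteredPart_dvd_mono _ he hde)
  · exact totient_div_orderOf_dvd a (coprimePart a d) (coprimePart a e)
      (coprimePart_pos a d) (coprimePart_pos a e)
      (filteredPart_dvd_mono _ he hde)
      (coprime_coprimePart a d) (coprime_coprimePart a e)
end

section
/- Suppose n is a ℚ-practical natural number and p is a prime not dividing n. Then: (1) p·n is ℚ-practical if and only if p ≤ n + 2; and (2) for every integer k ≥ 2, p^k·n is ℚ-practical if and only if p ≤ n + 1. -/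
/-!
Over `ℚ`, `X^N - 1 = ∏_{d ∣ N} Φ_d` with every `Φ_d` irreducible of degree `φ d`, so the degrees
of the monic divisors of `X^N - 1` are exactly the sums of `φ d` over sets of divisors `d` of `N`.
For `p ∤ n`, the divisors of `p^(j+1) n` are those of `p^j n` together with `p^(j+1) d`, `d ∣ n`,
and `φ (p^(j+1) d) = p^j (p - 1) φ d`; hence the degrees available for `p^(j+1) n` are the numbers
`a + p^j (p - 1) b` with `a` available for `p^j n` and `b` available for `n`.

If all of `0, …, p^j n` and `0, …, n` are available and the step `p^j (p - 1)` is at most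
`p^j n + 1`, these combinations fill `0, …, p^(j+1) n`; this is where `p ≤ n + 2` (for `j = 0`)
and `p ≤ n + 1` (for all `j`) come from. Conversely, for `p ≥ n + 3` the degree `n + 1` is not
available for `p n`, and for `p ≥ n + 2` every degree `m` available for `p^k n`, `k ≥ 1`, has
`⌊m / (p - 1)⌋ mod p ≤ n`, which rules out `m = (p - 1)^2` as soon as `k ≥ 2`.
-/

/-- A natural number `n ≥ 1` is `ℚ`-practical if for every `m` with `0 ≤ m ≤ n`,
the polynomial `X^n - 1` has a monic divisor of degree `m` in `ℚ[X]`. -/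
def QPractical (n : ℕ) : Prop :=
  1 ≤ n ∧ ∀ m : ℕ, m ≤ n → ∃ d : Polynomial ℚ, d.Monic ∧
    d ∣ (Polynomial.X ^ n - 1) ∧ d.natDegree = m

open Polynomial Finset
open scoped Nat

theorem Polynomial.exists_subset_eq_prod_of_monic_dvd_prod {K ι : Type*} [Field K]
    {f : ι → K[X]} {d : K[X]} (s : Finset ι) (hmonic : ∀ i ∈ s, (f i).Monic)
    (hirr : ∀ i ∈ s, Irreducible (f i)) (hd : d.Monic) (hdvd : d ∣ ∏ i ∈ s, f i) :
    ∃ t ⊆ s, d = ∏ i ∈ t, f i := by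
  classical
  induction s using Finset.induction_on generalizing d with
  | empty =>
    exact ⟨∅, subset_rfl, by simpa using hd.eq_one_of_isUnit (isUnit_of_dvd_one hdvd)⟩
  | insert a s ha ih =>
    rw [prod_insert ha] at hdvd
    have ih' : ∀ {e : K[X]}, e.Monic → e ∣ ∏ i ∈ s, f i → ∃ t ⊆ s, e = ∏ i ∈ t, f i :=
      ih (fun i hi => hmonic i (mem_insert_of_mem hi)) (fun i hi => hirr i (mem_insert_of_mem hi))
    by_cases hfad : f a ∣ d
    · obtain ⟨d', rfl⟩ := hfad
      have hfa : (f a).Monic := hmonic a (mem_insert_self a s)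
      obtain ⟨t, hts, rfl⟩ := ih' (hfa.of_mul_monic_left hd)
        ((mul_dvd_mul_iff_left hfa.ne_zero).mp hdvd)
      exact ⟨insert a t, insert_subset_insert a hts, (prod_insert fun h => ha (hts h)).symm⟩
    · have hcop : IsCoprime d (f a) :=
        ((hirr a (mem_insert_self a s)).prime.coprime_iff_not_dvd.mpr hfad).symm
      obtain ⟨t, hts, rfl⟩ := ih' hd (hcop.dvd_of_dvd_mul_left hdvd)
      exact ⟨t, hts.trans (subset_insert a s), rfl⟩

def IsSubsetSum {ι : Type*} (s : Finset ι) (f : ι → ℕ) (m : ℕ) : Prop :=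
  ∃ t ⊆ s, ∑ i ∈ t, f i = m

section IsSubsetSum

variable {ι κ : Type*} {s s₁ s₂ : Finset ι} {f : ι → ℕ} {m : ℕ}

theorem IsSubsetSum.le_sum (h : IsSubsetSum s f m) : m ≤ ∑ i ∈ s, f i := by
  obtain ⟨t, hts, rfl⟩ := h
  exact sum_le_sum_of_subset hts

theorem isSubsetSum_union_iff [DecidableEq ι] (h : Disjoint s₁ s₂) :
    IsSubsetSum (s₁ ∪ s₂) f m ↔
      ∃ a b, IsSubsetSum s₁ f a ∧ IsSubsetSum s₂ f b ∧ m = a + b := by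
  constructor
  · rintro ⟨t, hts, rfl⟩
    refine ⟨_, _, ⟨t ∩ s₁, inter_subset_right, rfl⟩, ⟨t ∩ s₂, inter_subset_right, rfl⟩, ?_⟩
    rw [← sum_union (h.mono inter_subset_right inter_subset_right), ← inter_union_distrib_left,
      inter_eq_left.mpr hts]
  · rintro ⟨_, _, ⟨t₁, ht₁, rfl⟩, ⟨t₂, ht₂, rfl⟩, rfl⟩
    exact ⟨t₁ ∪ t₂, union_subset_union ht₁ ht₂, sum_union (h.mono ht₁ ht₂)⟩

theorem isSubsetSum_image_iff [DecidableEq ι] {g : κ → ι} {s : Finset κ} (hg : Set.InjOn g s) :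
    IsSubsetSum (s.image g) f m ↔ IsSubsetSum s (f ∘ g) m := by
  constructor
  · rintro ⟨t, hts, rfl⟩
    obtain ⟨u, hus, rfl⟩ := subset_image_iff.mp hts
    exact ⟨u, hus, (sum_image fun x hx y hy => hg (hus hx) (hus hy)).symm⟩
  · rintro ⟨u, hus, rfl⟩
    exact ⟨u.image g, image_subset_image hus, sum_image fun x hx y hy => hg (hus hx) (hus hy)⟩

theorem isSubsetSum_congr {g : ι → ℕ} (h : ∀ i ∈ s, f i = g i) :
    IsSubsetSum s f m ↔ IsSubsetSum s g m := by
  refine exists_congr fun t => and_congr_right fun hts => ?_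
  rw [sum_congr rfl fun i hi => h i (hts hi)]

theorem isSubsetSum_const_mul_iff {c : ℕ} :
    IsSubsetSum s (fun i => c * f i) m ↔ ∃ b, IsSubsetSum s f b ∧ m = c * b := by
  constructor
  · rintro ⟨t, hts, rfl⟩
    exact ⟨_, ⟨t, hts, rfl⟩, (mul_sum t f c).symm⟩
  · rintro ⟨_, ⟨t, hts, rfl⟩, rfl⟩
    exact ⟨t, hts, (mul_sum t f c).symm⟩

end IsSubsetSum

theorem Nat.divisors_prime_pow_succ_mul {p : ℕ} (hp : p.Prime) (j n : ℕ) :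
    (p ^ (j + 1) * n).divisors = (p ^ j * n).divisors ∪ n.divisors.image (p ^ (j + 1) * ·) := by
  have hpow : (p ^ (j + 1)).divisors = insert (p ^ (j + 1)) (p ^ j).divisors := by
    rw [← insert_self_properDivisors (pow_ne_zero _ hp.ne_zero), properDivisors_prime_pow hp,
      divisors_prime_pow hp]
  rw [divisors_mul, divisors_mul, hpow, union_comm]
  exact image₂_insert_left

theorem Nat.disjoint_divisors_prime_pow_mul_image {p n : ℕ} (hp : p.Prime) (hpn : ¬ p ∣ n)
    (j : ℕ) : Disjoint (p ^ j * n).divisors (n.divisors.image (p ^ (j + 1) * ·)) := by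
  refine disjoint_right.mpr ?_
  rintro _ he hdvd
  obtain ⟨d, hd, rfl⟩ := mem_image.mp he
  have : p ^ j * p ∣ p ^ j * n := by
    rw [← pow_succ]
    exact (dvd_mul_right _ d).trans (Nat.dvd_of_mem_divisors hdvd)
  exact hpn ((Nat.mul_dvd_mul_iff_left (pow_pos hp.pos j)).mp this)

theorem Nat.totient_prime_pow_succ_mul {p d : ℕ} (hp : p.Prime) (hpd : ¬ p ∣ d) (j : ℕ) :
    φ (p ^ (j + 1) * d) = p ^ j * (p - 1) * φ d := by
  rw [totient_mul ((hp.coprime_iff_not_dvd.mpr hpd).pow_left _), totient_prime_pow_succ hp]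

theorem isSubsetSum_divisors_prime_pow_succ_mul_iff {p n : ℕ} (hp : p.Prime) (hpn : ¬ p ∣ n)
    (j m : ℕ) :
    IsSubsetSum (p ^ (j + 1) * n).divisors φ m ↔
      ∃ a b, IsSubsetSum (p ^ j * n).divisors φ a ∧ IsSubsetSum n.divisors φ b ∧
        m = a + p ^ j * (p - 1) * b := by
  have hinj : Set.InjOn (p ^ (j + 1) * ·) n.divisors := fun x _ y _ h =>
    Nat.eq_of_mul_eq_mul_left (pow_pos hp.pos _) h
  have htot : ∀ d ∈ n.divisors, (φ ∘ (p ^ (j + 1) * ·)) d = p ^ j * (p - 1) * φ d :=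
    fun d hd => Nat.totient_prime_pow_succ_mul hp
      (fun h => hpn (h.trans (Nat.dvd_of_mem_divisors hd))) j
  rw [Nat.divisors_prime_pow_succ_mul hp, isSubsetSum_union_iff
    (Nat.disjoint_divisors_prime_pow_mul_image hp hpn j)]
  simp only [isSubsetSum_image_iff hinj, isSubsetSum_congr htot, isSubsetSum_const_mul_iff]
  constructor
  · rintro ⟨a, _, ha, ⟨b, hb, rfl⟩, rfl⟩
    exact ⟨a, b, ha, hb, rfl⟩
  · rintro ⟨a, b, ha, hb, rfl⟩
    exact ⟨a, _, ha, ⟨b, hb, rfl⟩, rfl⟩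

theorem IsSubsetSum.le_of_divisors_totient {N m : ℕ} (h : IsSubsetSum N.divisors φ m) : m ≤ N :=
  Nat.sum_totient N ▸ h.le_sum

theorem Polynomial.natDegree_prod_cyclotomic {R : Type*} [CommRing R] [Nontrivial R]
    (t : Finset ℕ) :
    (∏ i ∈ t, cyclotomic i R).natDegree = ∑ i ∈ t, φ i := by
  rw [natDegree_prod_of_monic _ _ fun i _ => cyclotomic.monic i R]
  exact sum_congr rfl fun i _ => natDegree_cyclotomic i R

theorem exists_monic_dvd_X_pow_sub_one_natDegree_eq_iff {N : ℕ} (hN : 0 < N) (m : ℕ) :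
    (∃ d : ℚ[X], d.Monic ∧ d ∣ X ^ N - 1 ∧ d.natDegree = m) ↔ IsSubsetSum N.divisors φ m := by
  rw [← prod_cyclotomic_eq_X_pow_sub_one hN ℚ]
  constructor
  · rintro ⟨d, hd, hdvd, rfl⟩
    obtain ⟨t, hts, rfl⟩ := exists_subset_eq_prod_of_monic_dvd_prod N.divisors
      (fun i _ => cyclotomic.monic i ℚ)
      (fun i hi => cyclotomic.irreducible_rat (Nat.pos_of_mem_divisors hi)) hd hdvd
    exact ⟨t, hts, (natDegree_prod_cyclotomic t).symm⟩
  · rintro ⟨t, hts, rfl⟩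
    exact ⟨_, monic_prod_of_monic _ _ fun i _ => cyclotomic.monic i ℚ,
      prod_dvd_prod_of_subset t _ _ hts, natDegree_prod_cyclotomic t⟩

theorem Nat.exists_le_le_eq_add_mul {A B c m : ℕ} (hc : c ≤ A + 1) (hm : m ≤ A + c * B) :
    ∃ a ≤ A, ∃ b ≤ B, m = a + c * b := by
  rcases Nat.eq_zero_or_pos c with rfl | hc0
  · exact ⟨m, by simpa using hm, 0, Nat.zero_le _, by simp⟩
  rcases le_total (m / c) B with hle | hle
  · exact ⟨m % c, by have := Nat.mod_lt m hc0; omega, m / c, hle, (Nat.mod_add_div m c).symm⟩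
  · have : c * B ≤ m := (Nat.mul_le_mul_left c hle).trans (Nat.mul_div_le m c)
    exact ⟨m - c * B, by omega, B, le_rfl, by omega⟩

theorem qPractical_iff {N : ℕ} (hN : 0 < N) :
    QPractical N ↔ ∀ m ≤ N, IsSubsetSum N.divisors φ m := by
  simp only [QPractical, exists_monic_dvd_X_pow_sub_one_natDegree_eq_iff hN]
  exact and_iff_right hN

section QPractical

variable {p n : ℕ}

theorem QPractical.prime_pow_succ_mul {j : ℕ} (hp : p.Prime) (hpn : ¬ p ∣ n)
    (hj : QPractical (p ^ j * n)) (hn : QPractical n) (hgap : p ^ j * (p - 1) ≤ p ^ j * n + 1) :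
    QPractical (p ^ (j + 1) * n) := by
  have hN : p ^ (j + 1) * n = p ^ j * n + p ^ j * (p - 1) * n := by
    obtain ⟨q, rfl⟩ := Nat.exists_eq_add_one_of_ne_zero hp.ne_zero
    simp only [Nat.add_sub_cancel]
    ring
  rw [qPractical_iff (Nat.mul_pos (pow_pos hp.pos _) hn.1)]
  rw [qPractical_iff hj.1] at hj
  rw [qPractical_iff hn.1] at hn
  intro m hm
  obtain ⟨a, ha, b, hb, rfl⟩ := Nat.exists_le_le_eq_add_mul hgap (hN ▸ hm)
  exact (isSubsetSum_divisors_prime_pow_succ_mul_iff hp hpn j _).mpr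
    ⟨a, b, hj a ha, hn b hb, rfl⟩

theorem QPractical.prime_pow_mul (hp : p.Prime) (hpn : ¬ p ∣ n) (hn : QPractical n)
    (hle : p ≤ n + 1) (k : ℕ) : QPractical (p ^ k * n) := by
  induction k with
  | zero => simpa using hn
  | succ j ih =>
    refine ih.prime_pow_succ_mul hp hpn hn ?_
    have : p ^ j * (p - 1) ≤ p ^ j * n := Nat.mul_le_mul_left _ (by omega)
    omega

theorem QPractical.prime_mul (hp : p.Prime) (hpn : ¬ p ∣ n) (hn : QPractical n)
    (hle : p ≤ n + 2) : QPractical (p * n) := by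
  have hgap : p ^ 0 * (p - 1) ≤ p ^ 0 * n + 1 := by
    rw [pow_zero, one_mul, one_mul]
    omega
  simpa using QPractical.prime_pow_succ_mul hp hpn (by rwa [pow_zero, one_mul]) hn hgap

theorem not_qPractical_prime_mul (hp : p.Prime) (hpn : ¬ p ∣ n) (hn : 0 < n) (hnp : n + 3 ≤ p) :
    ¬ QPractical (p * n) := by
  intro h
  have hm : n + 1 ≤ p * n := by nlinarith
  have hsum := (qPractical_iff (Nat.mul_pos hp.pos hn)).mp h (n + 1) hm
  rw [← pow_one p, ← zero_add 1] at hsum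
  obtain ⟨a, b, ha, hb, hab⟩ := (isSubsetSum_divisors_prime_pow_succ_mul_iff hp hpn 0 _).mp hsum
  have ha' : a ≤ n := by simpa using ha.le_of_divisors_totient
  rw [pow_zero, one_mul] at hab
  rcases Nat.eq_zero_or_pos b with rfl | hb0
  · omega
  · have : p - 1 ≤ (p - 1) * b := Nat.le_mul_of_pos_right _ hb0
    omega

theorem div_sub_one_mod_le_of_isSubsetSum (hp : p.Prime) (hpn : ¬ p ∣ n) (hnp : n + 2 ≤ p)
    (j : ℕ) {m : ℕ} (hm : IsSubsetSum (p ^ (j + 1) * n).divisors φ m) : m / (p - 1) % p ≤ n := by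
  have hp1 : 0 < p - 1 := by omega
  induction j generalizing m with
  | zero =>
    obtain ⟨a, b, ha, hb, rfl⟩ := (isSubsetSum_divisors_prime_pow_succ_mul_iff hp hpn 0 m).mp hm
    have ha' : a ≤ n := by simpa using ha.le_of_divisors_totient
    have hb' : b ≤ n := hb.le_of_divisors_totient
    rw [pow_zero, one_mul, Nat.add_mul_div_left _ _ hp1, Nat.div_eq_of_lt (by omega),
      zero_add, Nat.mod_eq_of_lt (by omega)]
    exact hb'
  | succ j ih =>
    obtain ⟨a, b, ha, hb, rfl⟩ :=
      (isSubsetSum_divisors_prime_pow_succ_mul_iff hp hpn (j + 1) m).mp hm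
    rw [show p ^ (j + 1) * (p - 1) * b = (p - 1) * (p * (p ^ j * b)) by ring,
      Nat.add_mul_div_left _ _ hp1, Nat.add_mul_mod_self_left]
    exact ih ha

theorem not_qPractical_prime_pow_mul (hp : p.Prime) (hpn : ¬ p ∣ n) (hnp : n + 2 ≤ p) {k : ℕ}
    (hk : 2 ≤ k) : ¬ QPractical (p ^ k * n) := by
  intro h
  have hn : 0 < n := Nat.pos_of_mul_pos_left h.1
  have hm : (p - 1) * (p - 1) ≤ p ^ k * n :=
    calc (p - 1) * (p - 1) ≤ p ^ 2 := sq p ▸ Nat.mul_le_mul (Nat.sub_le p 1) (Nat.sub_le p 1)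
      _ ≤ p ^ k := Nat.pow_le_pow_right hp.pos hk
      _ ≤ p ^ k * n := Nat.le_mul_of_pos_right _ hn
  obtain ⟨j, rfl⟩ := Nat.exists_eq_add_of_le' hk
  have := div_sub_one_mod_le_of_isSubsetSum hp hpn hnp (j + 1)
    ((qPractical_iff h.1).mp h _ hm)
  rw [Nat.mul_div_cancel_left _ (by omega), Nat.mod_eq_of_lt (by omega)] at this
  omega

end QPractical

/-- If `n` is `ℚ`-practical and `p` is a prime not dividing `n`, then `p n` is
`ℚ`-practical iff `p ≤ n + 2`, and for `k ≥ 2`, `p^k n` is `ℚ`-practical iff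
`p ≤ n + 1`. -/
theorem QPractical_mul_prime_pow (n p : ℕ) (hn : QPractical n) (hp : p.Prime)
    (hpn : ¬ p ∣ n) :
    (QPractical (p * n) ↔ p ≤ n + 2) ∧
      ∀ k : ℕ, 2 ≤ k → (QPractical (p ^ k * n) ↔ p ≤ n + 1) := by
  refine ⟨⟨fun h => ?_, fun hle => ?_⟩, fun k hk => ⟨fun h => ?_, fun hle => ?_⟩⟩
  · by_contra! hlt
    exact not_qPractical_prime_mul hp hpn hn.1 hlt h
  · exact hn.prime_mul hp hpn hle
  · by_contra! hlt
    exact not_qPractical_prime_pow_mul hp hpn hlt hk h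
  · exact hn.prime_pow_mul hp hpn hle k
end

section
/- Let k be a nonnegative integer and suppose that the Fermat numbers F_0, F_1, …, F_{k−1} are all prime. Then n := F_0·F_1 ⋯ F_{k−1} (the empty product being 1) is a ℚ-optimal number with exactly k distinct prime factors. -/
/-- A natural number `n` is `ℚ`-optimal if for every `m` with `0 ≤ m ≤ n`, the
polynomial `X^n - 1` has exactly one monic divisor of degree `m` in `ℚ[X]`. -/
def QOptimal (n : ℕ) : Prop :=
  1 ≤ n ∧ ∀ m : ℕ, m ≤ n → ∃! d : Polynomial ℚ, d.Monic ∧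
    d ∣ (Polynomial.X ^ n - 1) ∧ d.natDegree = m

/-- The `m`-th Fermat number `F_m = 2^(2^m) + 1`. -/
def fermat (m : ℕ) : ℕ := 2 ^ (2 ^ m) + 1

/-!
Put `n = F_0 ⋯ F_{k-1} = 2^(2^k) - 1`. Its divisors are the products
`D_t = ∏_{i ∈ bits(t)} F_i` over the binary digits of `t < 2^k`, and `φ(D_t) = 2^t`.
Hence `X^n - 1 = ∏_{t < 2^k} Φ_{D_t}` is a product of distinct monic irreducibles of degrees
`1, 2, 4, …, 2^(2^k - 1)`, its monic divisors are exactly the subproducts, and by uniqueness of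
binary expansions there is exactly one of each degree `m ≤ n`.
-/

open Finset Polynomial
open scoped Nat

theorem Nat.toFinset_bitIndices_subset_range {t N : ℕ} (ht : t < 2 ^ N) :
    t.bitIndices.toFinset ⊆ range N := fun _ hi =>
  mem_range.mpr <| (Nat.pow_lt_pow_iff_right one_lt_two).mp <|
    (Nat.two_pow_le_of_mem_bitIndices (List.mem_toFinset.mp hi)).trans_lt ht

namespace Polynomial

variable {K : Type*} [Field K]

theorem exists_subset_eq_prod_of_monic_dvd_prod_s16 {ι : Type*} {Q : ι → K[X]} (s : Finset ι)
    (hmonic : ∀ i ∈ s, (Q i).Monic) (hirr : ∀ i ∈ s, Irreducible (Q i))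
    {d : K[X]} (hd : d.Monic) (hdvd : d ∣ ∏ i ∈ s, Q i) : ∃ u ⊆ s, d = ∏ i ∈ u, Q i := by
  classical
  induction s using Finset.induction generalizing d with
  | empty => exact ⟨∅, subset_rfl, hd.isUnit_iff.mp (isUnit_of_dvd_one hdvd)⟩
  | insert a s ha ih =>
    rw [prod_insert ha] at hdvd
    have hmonic' i (hi : i ∈ s) := hmonic i (mem_insert_of_mem hi)
    have hirr' i (hi : i ∈ s) := hirr i (mem_insert_of_mem hi)
    by_cases hQd : Q a ∣ d
    · obtain ⟨e, rfl⟩ := hQd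
      have he : e ∣ ∏ i ∈ s, Q i :=
        (mul_dvd_mul_iff_left (hirr a (mem_insert_self a s)).ne_zero).mp hdvd
      obtain ⟨u, hus, rfl⟩ :=
        ih hmonic' hirr' ((hmonic a (mem_insert_self a s)).of_mul_monic_left hd) he
      exact ⟨insert a u, insert_subset_insert a hus, (prod_insert fun h => ha (hus h)).symm⟩
    · have hcop : IsCoprime d (Q a) :=
        ((hirr a (mem_insert_self a s)).coprime_iff_not_dvd.mpr hQd).symm
      obtain ⟨u, hus, rfl⟩ := ih hmonic' hirr' hd (hcop.dvd_of_dvd_mul_left hdvd)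
      exact ⟨u, hus.trans (subset_insert a s), rfl⟩

theorem natDegree_prod_of_natDegree_eq_two_pow {Q : ℕ → K[X]} {N : ℕ}
    (hmonic : ∀ t < N, (Q t).Monic) (hdeg : ∀ t < N, (Q t).natDegree = 2 ^ t)
    {u : Finset ℕ} (hu : u ⊆ range N) : (∏ t ∈ u, Q t).natDegree = ∑ t ∈ u, 2 ^ t := by
  rw [natDegree_prod_of_monic _ _ fun t ht => hmonic t (mem_range.mp (hu ht))]
  exact sum_congr rfl fun t ht => hdeg t (mem_range.mp (hu ht))

theorem existsUnique_monic_dvd_prod_natDegree_eq {Q : ℕ → K[X]} {N : ℕ}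
    (hmonic : ∀ t < N, (Q t).Monic) (hirr : ∀ t < N, Irreducible (Q t))
    (hdeg : ∀ t < N, (Q t).natDegree = 2 ^ t) {m : ℕ} (hm : m < 2 ^ N) :
    ∃! d : K[X], d.Monic ∧ d ∣ ∏ t ∈ range N, Q t ∧ d.natDegree = m := by
  have hbits := Nat.toFinset_bitIndices_subset_range hm
  refine ⟨∏ t ∈ m.bitIndices.toFinset, Q t,
    ⟨monic_prod_of_monic _ _ fun t ht => hmonic t (mem_range.mp (hbits ht)),
      prod_dvd_prod_of_subset _ _ _ hbits, ?_⟩, ?_⟩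
  · rw [natDegree_prod_of_natDegree_eq_two_pow hmonic hdeg hbits,
      sum_toFinset_bitIndices_two_pow]
  · rintro d ⟨hd, hdvd, rfl⟩
    obtain ⟨u, hu, rfl⟩ := exists_subset_eq_prod_of_monic_dvd_prod_s16 _
      (fun t ht => hmonic t (mem_range.mp ht)) (fun t ht => hirr t (mem_range.mp ht)) hd hdvd
    rw [natDegree_prod_of_natDegree_eq_two_pow hmonic hdeg hu,
      toFinset_bitIndices_sum_two_pow]

end Polynomial

theorem Nat.card_divisors_prod_primes {P : Finset ℕ} (hP : ∀ p ∈ P, p.Prime) :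
    #(∏ p ∈ P, p).divisors = 2 ^ #P := by
  classical
  induction P using Finset.induction with
  | empty => simp
  | insert p P hp ih =>
    have hp' : p.Prime := hP p (mem_insert_self p P)
    have hcop : Nat.Coprime p (∏ q ∈ P, q) := Nat.Coprime.prod_right fun q hq =>
      (Nat.coprime_primes hp' (hP q (mem_insert_of_mem hq))).mpr fun h => hp (h ▸ hq)
    rw [prod_insert hp, Nat.Coprime.card_divisors_mul hcop, hp'.divisors,
      card_pair hp'.one_lt.ne, ih fun q hq => hP q (mem_insert_of_mem hq),
      card_insert_of_notMem hp, pow_succ']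

theorem fermat_injective : Function.Injective fermat := Nat.fermatNumber_injective

theorem fermat_pos (i : ℕ) : 0 < fermat i := Nat.succ_pos _

theorem prod_fermat_eq_prod_image (s : Finset ℕ) :
    ∏ i ∈ s, fermat i = ∏ p ∈ s.image fermat, p := by
  rw [prod_image fun _ _ _ _ h => fermat_injective h]

theorem totient_prod_fermat {s : Finset ℕ} (hs : ∀ i ∈ s, (fermat i).Prime) :
    φ (∏ i ∈ s, fermat i) = 2 ^ ∑ i ∈ s, 2 ^ i := by
  classical
  induction s using Finset.induction with
  | empty => simp
  | insert a s ha ih =>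
    have hcop : Nat.Coprime (fermat a) (∏ i ∈ s, fermat i) := Nat.Coprime.prod_right
      fun i hi => Nat.coprime_fermatNumber_fermatNumber fun h => ha (h ▸ hi)
    rw [prod_insert ha, sum_insert ha, Nat.totient_mul hcop,
      Nat.totient_prime (hs a (mem_insert_self a s)), ih fun i hi => hs i (mem_insert_of_mem hi),
      pow_add, fermat, Nat.add_sub_cancel]

theorem prod_range_fermat_add_one (k : ℕ) : ∏ i ∈ range k, fermat i + 1 = 2 ^ 2 ^ k := by
  have hpos : 0 < 2 ^ 2 ^ k := by positivity
  rw [show ∏ i ∈ range k, fermat i = fermat k - 2 from Nat.prod_fermatNumber k, fermat]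
  omega

theorem prod_fermat_pos (s : Finset ℕ) : 0 < ∏ i ∈ s, fermat i :=
  prod_pos fun i _ => fermat_pos i

def fermatDivisor (t : ℕ) : ℕ := ∏ i ∈ t.bitIndices.toFinset, fermat i

theorem fermatDivisor_pos (t : ℕ) : 0 < fermatDivisor t :=
  prod_fermat_pos _

theorem totient_fermatDivisor {k t : ℕ} (hk : ∀ i < k, (fermat i).Prime) (ht : t < 2 ^ k) :
    φ (fermatDivisor t) = 2 ^ t := by
  rw [fermatDivisor, totient_prod_fermat fun i hi =>
      hk i (mem_range.mp (Nat.toFinset_bitIndices_subset_range ht hi)),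
    sum_toFinset_bitIndices_two_pow]

theorem fermatDivisor_dvd_prod_fermat {k t : ℕ} (ht : t < 2 ^ k) :
    fermatDivisor t ∣ ∏ i ∈ range k, fermat i :=
  prod_dvd_prod_of_subset _ _ _ (Nat.toFinset_bitIndices_subset_range ht)

theorem injOn_fermatDivisor {k : ℕ} (hk : ∀ i < k, (fermat i).Prime) :
    Set.InjOn fermatDivisor (range (2 ^ k)) := fun t ht u hu h =>
  Nat.pow_right_injective le_rfl <| by
    dsimp only
    rw [← totient_fermatDivisor hk (mem_range.mp ht), ← totient_fermatDivisor hk (mem_range.mp hu),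
      h]

theorem image_fermatDivisor {k : ℕ} (hk : ∀ i < k, (fermat i).Prime) :
    (range (2 ^ k)).image fermatDivisor = (∏ i ∈ range k, fermat i).divisors := by
  refine eq_of_subset_of_card_le (fun d hd => ?_) ?_
  · obtain ⟨t, ht, rfl⟩ := mem_image.mp hd
    exact Nat.mem_divisors.mpr ⟨fermatDivisor_dvd_prod_fermat (mem_range.mp ht),
      (prod_fermat_pos _).ne'⟩
  · rw [card_image_of_injOn (injOn_fermatDivisor hk), card_range, prod_fermat_eq_prod_image,
      Nat.card_divisors_prod_primes (forall_mem_image.mpr fun i hi => hk i (mem_range.mp hi)),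
      card_image_of_injective _ fermat_injective, card_range]

theorem X_pow_prod_fermat_sub_one_eq_prod_cyclotomic (R : Type*) [CommRing R] {k : ℕ}
    (hk : ∀ i < k, (fermat i).Prime) :
    (X : R[X]) ^ (∏ i ∈ range k, fermat i) - 1 =
      ∏ t ∈ range (2 ^ k), cyclotomic (fermatDivisor t) R := by
  rw [← prod_cyclotomic_eq_X_pow_sub_one (prod_fermat_pos _), ← image_fermatDivisor hk,
    prod_image (injOn_fermatDivisor hk)]

theorem primeFactors_prod_fermat {k : ℕ} (hk : ∀ i < k, (fermat i).Prime) :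
    (∏ i ∈ range k, fermat i).primeFactors = (range k).image fermat := by
  rw [prod_fermat_eq_prod_image,
    Nat.primeFactors_prod (forall_mem_image.mpr fun i hi => hk i (mem_range.mp hi))]

/-- If the Fermat numbers `F_0, …, F_{k-1}` are all prime, then `n = F_0 F_1 ⋯ F_{k-1}`
is `ℚ`-optimal with exactly `k` distinct prime factors. -/
theorem QOptimal_of_fermat_primes (k : ℕ) (hk : ∀ i < k, (fermat i).Prime) :
    QOptimal (∏ i ∈ Finset.range k, fermat i) ∧
      (∏ i ∈ Finset.range k, fermat i).primeFactors.card = k := by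
  refine ⟨⟨prod_fermat_pos _, fun m hm => ?_⟩, ?_⟩
  · rw [X_pow_prod_fermat_sub_one_eq_prod_cyclotomic ℚ hk]
    refine existsUnique_monic_dvd_prod_natDegree_eq (fun t _ => cyclotomic.monic _ ℚ)
      (fun t _ => cyclotomic.irreducible_rat (fermatDivisor_pos t)) (fun t ht => ?_) ?_
    · rw [natDegree_cyclotomic, totient_fermatDivisor hk ht]
    · have := prod_range_fermat_add_one k
      omega
  · rw [primeFactors_prod_fermat hk, card_image_of_injective _ fermat_injective, card_range]
end

section
/- Let k be a nonnegative integer. If n is a ℚ-optimal natural number with exactly k distinct prime factors, then the Fermat numbers F_0, F_1, …, F_{k−1} are all prime and n = F_0·F_1 ⋯ F_{k−1}. -/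
open Polynomial Finset


-- monic divisor of a product of monic irreducibles is a subproduct
lemma monic_dvd_prod {s : Finset ℕ} {f : ℕ → Polynomial ℚ}
    (hm : ∀ i ∈ s, (f i).Monic) (hi : ∀ i ∈ s, Irreducible (f i))
    {d : Polynomial ℚ} (hd : d.Monic) (hdvd : d ∣ ∏ i ∈ s, f i) :
    ∃ S ⊆ s, d = ∏ i ∈ S, f i := by
  induction s using Finset.induction_on generalizing d with
  | empty =>
    refine ⟨∅, Finset.Subset.refl _, ?_⟩
    simpa using hd.eq_one_of_isUnit (isUnit_of_dvd_one (by simpa using hdvd))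
  | @insert a s ha ih =>
    rw [Finset.prod_insert ha] at hdvd
    by_cases hfa : f a ∣ d
    · obtain ⟨d', rfl⟩ := hfa
      have hfm : (f a).Monic := hm a (mem_insert_self a s)
      have hd' : d'.Monic := hfm.of_mul_monic_left hd
      have hne : f a ≠ 0 := hfm.ne_zero
      have hdd : d' ∣ ∏ i ∈ s, f i := (mul_dvd_mul_iff_left hne).mp hdvd
      obtain ⟨S, hS, rfl⟩ := ih (fun i hi' => hm i (mem_insert_of_mem hi'))
        (fun i hi' => hi i (mem_insert_of_mem hi')) hd' hdd
      refine ⟨insert a S, insert_subset_insert a hS, ?_⟩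
      rw [Finset.prod_insert (fun h => ha (hS h))]
    · have hcop : IsCoprime (f a) d :=
        (hi a (mem_insert_self a s)).coprime_iff_not_dvd.mpr hfa
      obtain ⟨S, hS, rfl⟩ := ih (fun i hi' => hm i (mem_insert_of_mem hi'))
        (fun i hi' => hi i (mem_insert_of_mem hi')) hd
        (hcop.symm.dvd_of_dvd_mul_left hdvd)
      exact ⟨S, hS.trans (subset_insert a s), rfl⟩

lemma prod_cyc_monic (S : Finset ℕ) : (∏ d ∈ S, cyclotomic d ℚ).Monic :=
  monic_prod_of_monic _ _ fun d _ => cyclotomic.monic d ℚ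

lemma prod_cyc_dvd {n : ℕ} (hn : 0 < n) {S : Finset ℕ} (hS : S ⊆ n.divisors) :
    (∏ d ∈ S, cyclotomic d ℚ) ∣ X ^ n - 1 := by
  rw [← prod_cyclotomic_eq_X_pow_sub_one hn]
  exact Finset.prod_dvd_prod_of_subset _ _ _ hS

lemma prod_cyc_natDegree (S : Finset ℕ) :
    (∏ d ∈ S, cyclotomic d ℚ).natDegree = ∑ d ∈ S, d.totient := by
  rw [natDegree_prod _ _ (fun i _ => (cyclotomic.monic i ℚ).ne_zero)]
  simp [natDegree_cyclotomic]

lemma cyc_prime {d : ℕ} (hd : 0 < d) : Prime (cyclotomic d ℚ) :=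
  (cyclotomic.irreducible_rat hd).prime

lemma prod_cyc_subset {S T : Finset ℕ} (hS : 0 ∉ S) (hT : 0 ∉ T)
    (h : ∏ d ∈ S, cyclotomic d ℚ ∣ ∏ d ∈ T, cyclotomic d ℚ) : S ⊆ T := by
  intro d hd
  have hdpos : 0 < d := Nat.pos_of_ne_zero (fun h0 => hS (h0 ▸ hd))
  have hdvd : cyclotomic d ℚ ∣ ∏ e ∈ T, cyclotomic e ℚ :=
    dvd_trans (Finset.dvd_prod_of_mem (fun d => cyclotomic d ℚ) hd) h
  obtain ⟨e, heT, hde⟩ := (cyc_prime hdpos).dvd_finset_prod_iff _ |>.mp hdvd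
  have hepos : 0 < e := Nat.pos_of_ne_zero (fun h0 => hT (h0 ▸ heT))
  have : cyclotomic d ℚ = cyclotomic e ℚ :=
    eq_of_monic_of_associated (cyclotomic.monic d ℚ) (cyclotomic.monic e ℚ)
      (associated_of_dvd_dvd hde ((cyclotomic.irreducible_rat hdpos).dvd_symm
        (cyclotomic.irreducible_rat hepos) hde))
  rwa [cyclotomic_injective this]

lemma prod_cyc_inj {S T : Finset ℕ} (hS : 0 ∉ S) (hT : 0 ∉ T)
    (h : ∏ d ∈ S, cyclotomic d ℚ = ∏ d ∈ T, cyclotomic d ℚ) : S = T :=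
  Finset.Subset.antisymm (prod_cyc_subset hS hT h.dvd) (prod_cyc_subset hT hS (dvd_of_eq h.symm))

lemma qopt_subset_sum {n : ℕ} (hn1 : 1 ≤ n)
    (hn : ∀ m : ℕ, m ≤ n → ∃! d : Polynomial ℚ, d.Monic ∧
      d ∣ (Polynomial.X ^ n - 1) ∧ d.natDegree = m) :
    ∀ m ≤ n, ∃! S : Finset ℕ, S ⊆ n.divisors ∧ ∑ d ∈ S, d.totient = m := by
  intro m hm
  obtain ⟨d, ⟨hdm, hddvd, hddeg⟩, hdu⟩ := hn m hm
  have hzero : (0 : ℕ) ∉ n.divisors := by simp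
  obtain ⟨S, hS, rfl⟩ := monic_dvd_prod (f := fun d => cyclotomic d ℚ)
    (fun i _ => cyclotomic.monic i ℚ)
    (fun i hi => cyclotomic.irreducible_rat (Nat.pos_of_mem_divisors hi)) hdm
    (by rw [show (∏ i ∈ n.divisors, (fun d => cyclotomic d ℚ) i) = X ^ n - 1 from prod_cyclotomic_eq_X_pow_sub_one hn1 ℚ]; exact hddvd)
  refine ⟨S, ⟨hS, by rw [← prod_cyc_natDegree]; exact hddeg⟩, ?_⟩
  rintro T ⟨hT, hTsum⟩
  have h1 : (∏ d ∈ T, cyclotomic d ℚ) = ∏ d ∈ S, cyclotomic d ℚ := by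
    refine hdu _ ⟨prod_cyc_monic T, prod_cyc_dvd hn1 hT, ?_⟩
    rw [prod_cyc_natDegree]; exact hTsum
  exact prod_cyc_inj (fun h => hzero (hT h)) (fun h => hzero (hS h)) h1

lemma half_image_sum {S : Finset ℕ} (h : ∀ a ∈ S, 2 ∣ a) :
    ∑ a ∈ S, a = 2 * ∑ a ∈ S.image (· / 2), a := by
  have hinj : Set.InjOn (· / 2) S := by
    intro a ha b hb hab
    obtain ⟨a', rfl⟩ := h a ha; obtain ⟨b', rfl⟩ := h b hb
    simpa [Nat.mul_div_cancel_left] using hab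
  rw [Finset.sum_image hinj, Finset.mul_sum]
  exact Finset.sum_congr rfl fun a ha => (Nat.mul_div_cancel' (h a ha) ).symm

lemma double_half_image {S : Finset ℕ} (h : ∀ a ∈ S, 2 ∣ a) :
    (S.image (· / 2)).image (2 * ·) = S := by
  ext b
  simp only [Finset.mem_image, Finset.image_image, Function.comp_apply]
  constructor
  · rintro ⟨a, ha, rfl⟩
    rwa [Nat.mul_div_cancel' (h a ha)]
  · intro hb
    exact ⟨b, hb, Nat.mul_div_cancel' (h b hb)⟩

lemma keyB : ∀ (t : ℕ) (s : Finset ℕ), s.card = t →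
    (∀ m ≤ ∑ a ∈ s, a, ∃! S : Finset ℕ, S ⊆ s ∧ ∑ a ∈ S, a = m) →
    s = (Finset.range t).image (2 ^ ·) := by
  intro t
  induction t with
  | zero => intro s hcard _; simpa using Finset.card_eq_zero.mp hcard
  | succ t ih =>
    intro s hcard hbij
    set N := ∑ a ∈ s, a with hNdef
    -- 0 ∉ s
    have h0 : (0 : ℕ) ∉ s := by
      intro h0
      obtain ⟨S, -, hu⟩ := hbij 0 (Nat.zero_le N)
      have e1 : ({0} : Finset ℕ) = S := hu {0} ⟨by simpa using h0, by simp⟩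
      have e2 : (∅ : Finset ℕ) = S := hu ∅ ⟨Finset.empty_subset s, by simp⟩
      exact Finset.singleton_ne_empty 0 (e1.trans e2.symm)
    have hpos : ∀ a ∈ s, 1 ≤ a := fun a ha =>
      Nat.one_le_iff_ne_zero.mpr (fun h => h0 (h ▸ ha))
    have hsne : s.Nonempty := Finset.card_pos.mp (by omega)
    have hsub_le : ∀ S ⊆ s, ∑ a ∈ S, a ≤ N :=
      fun S hS => Finset.sum_le_sum_of_subset hS
    have hN1 : 1 ≤ N := by
      obtain ⟨a, ha⟩ := hsne
      have h2 : a ≤ ∑ x ∈ s, x := Finset.single_le_sum (fun i _ => Nat.zero_le i) ha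
      have := hpos a ha
      omega
    -- 1 ∈ s
    have h1s : (1 : ℕ) ∈ s := by
      obtain ⟨S, ⟨hSs, hSsum⟩, -⟩ := hbij 1 hN1
      obtain ⟨a, haS⟩ : S.Nonempty := by
        rw [Finset.nonempty_iff_ne_empty]; rintro rfl; simp at hSsum
      have ha1 : a = 1 := by
        have h2 : a ≤ ∑ x ∈ S, x := Finset.single_le_sum (fun i _ => Nat.zero_le i) haS
        have := hpos a (hSs haS)
        omega
      exact hSs (ha1 ▸ haS)
    -- parity claim
    have parity : ∀ m, m ≤ N → ∀ S, S ⊆ s → ∑ a ∈ S, a = m → (1 ∈ S ↔ Odd m) := by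
      intro m
      induction m using Nat.strong_induction_on with
      | _ m ihm =>
        intro hmN S hSs hSsum
        match m with
        | 0 =>
          have : S = ∅ := by
            refine Finset.eq_empty_of_forall_notMem fun a ha => ?_
            have h3 : a = 0 := by
              have h2 : a ≤ ∑ x ∈ S, x := Finset.single_le_sum (fun i _ => Nat.zero_le i) ha
              omega
            exact h0 (h3 ▸ hSs ha)
          simp [this]
        | Nat.succ m' =>
          by_cases h1S : 1 ∈ S
          · have hS' : S.erase 1 ⊆ s := (Finset.erase_subset 1 S).trans hSs
            have hsum' : ∑ a ∈ S.erase 1, a = m' := by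
              have h2 : 1 + ∑ a ∈ S.erase 1, a = ∑ a ∈ S, a :=
                Finset.add_sum_erase S (fun i => i) h1S
              omega
            have := ihm m' (by omega) (by omega) (S.erase 1) hS' hsum'
            have h1e : 1 ∉ S.erase 1 := Finset.notMem_erase 1 S
            have hno : ¬ Odd m' := fun ho => h1e (this.mpr ho)
            simp only [h1S, true_iff]
            rw [Nat.odd_iff] at hno ⊢
            omega
          · simp only [h1S, false_iff]
            intro hodd
            have hm'even : ¬ Odd m' := by
              rw [Nat.odd_iff] at hodd ⊢
              omega
            obtain ⟨S₁, ⟨hS₁s, hS₁sum⟩, -⟩ := hbij m' (by omega)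
            have h1S₁ : 1 ∉ S₁ :=
              fun h => hm'even ((ihm m' (by omega) (by omega) S₁ hS₁s hS₁sum).mp h)
            have hins : insert 1 S₁ ⊆ s := Finset.insert_subset h1s hS₁s
            have hinssum : ∑ a ∈ insert 1 S₁, a = m' + 1 := by
              rw [Finset.sum_insert h1S₁, hS₁sum]
              omega
            obtain ⟨S₀, -, hu⟩ := hbij (m' + 1) hmN
            have e1 := hu _ ⟨hins, hinssum⟩
            have e2 := hu _ ⟨hSs, hSsum⟩
            rw [← e2] at e1
            exact h1S (e1 ▸ Finset.mem_insert_self 1 S₁)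
    -- every non-1 element even
    have heven : ∀ a ∈ s.erase 1, 2 ∣ a := by
      intro a ha
      have ha1 : a ≠ 1 := Finset.ne_of_mem_erase ha
      have has : a ∈ s := Finset.mem_of_mem_erase ha
      have haN : a ≤ N := hsub_le {a} (by simpa using has)
      have hp := parity a haN {a} (by simpa using has) (by simp)
      have : ¬ Odd a := by
        intro ho
        have h1a : (1 : ℕ) ∈ ({a} : Finset ℕ) := hp.mpr ho
        simp at h1a
        exact ha1 h1a.symm
      rw [Nat.odd_iff] at this
      omega
    set s' := s.erase 1 with hs'def
    have hs'card : s'.card = t := by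
      rw [hs'def, Finset.card_erase_of_mem h1s, hcard]; omega
    have hsums' : 1 + ∑ a ∈ s', a = N := Finset.add_sum_erase s (fun i => i) h1s
    set s'' := s'.image (· / 2) with hs''def
    have hs'even : ∀ a ∈ s', 2 ∣ a := heven
    have hup : s''.image (2 * ·) = s' := double_half_image hs'even
    have hsum2 : ∑ a ∈ s', a = 2 * ∑ a ∈ s'', a := half_image_sum hs'even
    set M := ∑ a ∈ s'', a with hMdef
    have hs''card : s''.card = t := by
      rw [hs''def, Finset.card_image_of_injOn, hs'card]
      intro a ha b hb hab
      obtain ⟨a', rfl⟩ := hs'even a ha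
      obtain ⟨b', rfl⟩ := hs'even b hb
      simpa [Nat.mul_div_cancel_left] using hab
    have hbij'' : ∀ m ≤ M, ∃! S : Finset ℕ, S ⊆ s'' ∧ ∑ a ∈ S, a = m := by
      intro m hm
      have h2m : 2 * m ≤ N := by omega
      obtain ⟨S, ⟨hSs, hSsum⟩, hu⟩ := hbij (2 * m) h2m
      have h1S : 1 ∉ S := by
        intro h1
        have := (parity (2 * m) h2m S hSs hSsum).mp h1
        rw [Nat.odd_iff] at this
        omega
      have hSs' : S ⊆ s' := fun a ha => Finset.mem_erase.mpr ⟨fun h => h1S (h ▸ ha), hSs ha⟩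
      have hSeven : ∀ a ∈ S, 2 ∣ a := fun a ha => hs'even a (hSs' ha)
      refine ⟨S.image (· / 2), ⟨?_, ?_⟩, ?_⟩
      · rw [hs''def]
        exact Finset.image_subset_image hSs'
      · have := half_image_sum hSeven
        omega
      · rintro T ⟨hTs, hTsum⟩
        have hTup : T.image (2 * ·) ⊆ s' := by
          rw [← hup]
          exact Finset.image_subset_image hTs
        have hTupsum : ∑ a ∈ T.image (2 * ·), a = 2 * m := by
          rw [Finset.sum_image (fun a _ b _ h => by omega), ← Finset.mul_sum, hTsum]
        have hTeq : T.image (2 * ·) = S :=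
          hu _ ⟨hTup.trans (Finset.erase_subset 1 s), hTupsum⟩
        have hrec : (T.image (2 * ·)).image (· / 2) = T := by
          ext b
          simp only [Finset.image_image, Finset.mem_image, Function.comp_apply]
          constructor
          · rintro ⟨a, ha, rfl⟩
            rw [Nat.mul_div_cancel_left a (by norm_num)]
            exact ha
          · intro hb
            exact ⟨b, hb, by omega⟩
        rw [← hrec, hTeq]
    have hs''eq := ih s'' hs''card hbij''
    have hs : s = insert 1 s' := by rw [hs'def, Finset.insert_erase h1s]
    rw [hs, ← hup, hs''eq]
    ext x
    simp only [Finset.mem_insert, Finset.mem_image, Finset.mem_range]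
    constructor
    · rintro (rfl | ⟨_, ⟨i, hi, rfl⟩, rfl⟩)
      · exact ⟨0, by omega, rfl⟩
      · exact ⟨i + 1, by omega, by ring⟩
    · rintro ⟨i, hi, rfl⟩
      match i with
      | 0 => left; rfl
      | Nat.succ j => right; exact ⟨2 ^ j, ⟨j, by omega, rfl⟩, by rw [pow_succ]; ring⟩

lemma transfer_bij {s : Finset ℕ} {f : ℕ → ℕ} (hinj : Set.InjOn f s)
    (h : ∀ m ≤ ∑ a ∈ s, f a, ∃! S : Finset ℕ, S ⊆ s ∧ ∑ a ∈ S, f a = m) :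
    ∀ m ≤ ∑ a ∈ s.image f, a, ∃! T : Finset ℕ, T ⊆ s.image f ∧ ∑ a ∈ T, a = m := by
  have hsum : ∑ a ∈ s.image f, a = ∑ a ∈ s, f a := Finset.sum_image hinj
  intro m hm
  obtain ⟨S, ⟨hSs, hSsum⟩, hu⟩ := h m (by omega)
  refine ⟨S.image f, ⟨Finset.image_subset_image hSs, ?_⟩, ?_⟩
  · rw [Finset.sum_image (fun x hx y hy => hinj (hSs hx) (hSs hy))]
    exact hSsum
  · rintro T ⟨hTs, hTsum⟩
    set ST := s.filter (fun a => f a ∈ T) with hSTdef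
    have hSTs : ST ⊆ s := Finset.filter_subset _ s
    have hTeq : T = ST.image f := by
      ext b
      constructor
      · intro hb
        obtain ⟨a, ha, rfl⟩ := Finset.mem_image.mp (hTs hb)
        exact Finset.mem_image.mpr ⟨a, Finset.mem_filter.mpr ⟨ha, hb⟩, rfl⟩
      · intro hb
        obtain ⟨a, ha, rfl⟩ := Finset.mem_image.mp hb
        exact (Finset.mem_filter.mp ha).2
    have hSTsum : ∑ a ∈ ST, f a = m := by
      rw [hTeq, Finset.sum_image (fun x hx y hy => hinj (hSTs hx) (hSTs hy))] at hTsum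
      exact hTsum
    rw [hTeq, hu ST ⟨hSTs, hSTsum⟩]

lemma totient_prod_primes (S : Finset ℕ) (hS : ∀ p ∈ S, Nat.Prime p) :
    (∏ p ∈ S, p).totient = ∏ p ∈ S, (p - 1) := by
  induction S using Finset.induction_on with
  | empty => simp
  | @insert a S' ha ih =>
    have hap : Nat.Prime a := hS a (Finset.mem_insert_self a S')
    have hcop : Nat.Coprime a (∏ p ∈ S', p) := by
      refine Nat.Coprime.prod_right fun q hq => ?_
      exact (Nat.coprime_primes hap (hS q (Finset.mem_insert_of_mem hq))).mpr
        (fun h => ha (h ▸ hq))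
    rw [Finset.prod_insert ha, Finset.prod_insert ha,
      Nat.totient_mul hcop, Nat.totient_prime hap,
      ih (fun p hp => hS p (Finset.mem_insert_of_mem hp))]

theorem fermat_test (k n : ℕ) (hn1' : 1 ≤ n)
    (hn2 : ∀ m : ℕ, m ≤ n → ∃! d : Polynomial ℚ, d.Monic ∧
      d ∣ (Polynomial.X ^ n - 1) ∧ d.natDegree = m)
    (hk : n.primeFactors.card = k) :
    (∀ i < k, Nat.Prime (2 ^ (2 ^ i) + 1)) ∧ n = ∏ i ∈ Finset.range k, (2 ^ (2 ^ i) + 1) := by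
  have hnpos : 0 < n := hn1'
  have hA := qopt_subset_sum hn1' hn2
  have hdivsum : ∑ d ∈ n.divisors, d.totient = n := Nat.sum_totient n
  have hinj : Set.InjOn Nat.totient n.divisors := by
    intro a ha b hb hab
    have ha' : a ∈ n.divisors := ha
    have hb' : b ∈ n.divisors := hb
    have haN : a.totient ≤ n :=
      le_trans (Nat.totient_le a) (Nat.le_of_dvd hnpos (Nat.dvd_of_mem_divisors ha'))
    obtain ⟨S, -, hu⟩ := hA a.totient haN
    have e1 := hu {a} ⟨by simpa using ha', by simp⟩
    have e2 := hu {b} ⟨by simpa using hb', by simp [← hab]⟩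
    have := e1.trans e2.symm
    simpa using this
  set W := n.divisors.image Nat.totient with hWdef
  have hWsum : ∑ a ∈ W, a = n := by
    rw [hWdef, Finset.sum_image hinj]
    exact hdivsum
  have hWbij : ∀ m ≤ ∑ a ∈ W, a, ∃! T : Finset ℕ, T ⊆ W ∧ ∑ a ∈ T, a = m :=
    transfer_bij hinj (by rw [hdivsum]; exact hA)
  set τ := n.divisors.card with hτ
  have hWcard : W.card = τ := Finset.card_image_of_injOn hinj
  have hW : W = (Finset.range τ).image (2 ^ ·) := by
    rw [← hWcard]
    exact keyB W.card W rfl hWbij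
  have hτpos : 1 ≤ τ := by
    rw [hτ]
    exact Finset.card_pos.mpr ⟨n, Nat.mem_divisors_self n (by omega)⟩
  have hodd : ¬ 2 ∣ n := by
    intro h2
    have h1d : (1:ℕ) ∈ n.divisors := Nat.one_mem_divisors.mpr (by omega)
    have h2d : (2:ℕ) ∈ n.divisors := Nat.mem_divisors.mpr ⟨h2, by omega⟩
    have : (1:ℕ) = 2 := hinj h1d h2d (by decide)
    omega
  have hsq : Squarefree n := by
    rw [Nat.squarefree_iff_prime_squarefree]
    intro p hp hpp
    have hp' : p.Prime := hp
    have hpd : p * p ∈ n.divisors := Nat.mem_divisors.mpr ⟨hpp, by omega⟩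
    have hmem : (p * p).totient ∈ W := Finset.mem_image_of_mem _ hpd
    rw [hW] at hmem
    obtain ⟨i, -, hi⟩ := Finset.mem_image.mp hmem
    have hptot : (p * p).totient = p * (p - 1) := by
      rw [← pow_two, Nat.totient_prime_pow hp' (by norm_num)]
      norm_num
    have hpdvd : p ∣ 2 ^ i := by
      rw [hi]
      exact ⟨p - 1, hptot⟩
    have : p = 2 := (Nat.prime_dvd_prime_iff_eq hp' Nat.prime_two).mp
      (hp'.dvd_of_dvd_pow hpdvd)
    subst this
    exact hodd (dvd_trans ⟨2, rfl⟩ hpp)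
  set e : ℕ → ℕ := fun p => Nat.log 2 (p - 1) with hedef
  have he : ∀ p ∈ n.primeFactors, p = 2 ^ (e p) + 1 := by
    intro p hp
    have hpp : p.Prime := Nat.prime_of_mem_primeFactors hp
    have hpd : p ∈ n.divisors :=
      Nat.mem_divisors.mpr ⟨Nat.dvd_of_mem_primeFactors hp, by omega⟩
    have hmem : p.totient ∈ W := Finset.mem_image_of_mem _ hpd
    rw [hW] at hmem
    obtain ⟨i, -, hi⟩ := Finset.mem_image.mp hmem
    rw [Nat.totient_prime hpp] at hi
    have hp2 : 2 ≤ p := hpp.two_le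
    have hpi : p - 1 = 2 ^ i := hi.symm
    have hlog : e p = i := by
      rw [hedef]
      simp only
      rw [hpi, Nat.log_pow (by norm_num)]
    rw [hlog]
    omega
  have heinj : Set.InjOn e n.primeFactors := by
    intro a ha b hb hab
    have h1 := he a ha
    have h2 := he b hb
    rw [h1, h2, hab]
  have hprodmem : ∀ S ⊆ n.primeFactors, (∏ p ∈ S, p) ∈ n.divisors := by
    intro S hS
    refine Nat.mem_divisors.mpr ⟨Finset.prod_primes_dvd n ?_ ?_, by omega⟩
    · exact fun p hp => (Nat.prime_of_mem_primeFactors (hS hp)).prime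
    · exact fun p hp => Nat.dvd_of_mem_primeFactors (hS hp)
  have hφprod : ∀ S ⊆ n.primeFactors, (∏ p ∈ S, p).totient = 2 ^ (∑ p ∈ S, e p) := by
    intro S hS
    rw [totient_prod_primes S (fun p hp => Nat.prime_of_mem_primeFactors (hS hp)),
      ← Finset.prod_pow_eq_pow_sum]
    refine Finset.prod_congr rfl fun p hp => ?_
    have hpe := he p (hS hp)
    conv_lhs => rw [hpe]
    simp
  set E := ∑ p ∈ n.primeFactors, e p with hEdef
  have hnprod : ∏ p ∈ n.primeFactors, p = n := Nat.prod_primeFactors_of_squarefree hsq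
  have hφn : n.totient = 2 ^ E := by
    rw [← hnprod]
    exact hφprod _ (Finset.Subset.refl _)
  have hEup : E < τ := by
    have hmem : n.totient ∈ W :=
      Finset.mem_image_of_mem _ (Nat.mem_divisors_self n (by omega))
    rw [hW] at hmem
    obtain ⟨i, hirange, hieq⟩ := Finset.mem_image.mp hmem
    have : i = E := Nat.pow_right_injective (le_refl 2)
      (show (2:ℕ) ^ i = 2 ^ E by rw [hieq, hφn])
    have := Finset.mem_range.mp hirange
    omega
  have hEdown : τ - 1 ≤ E := by
    have h2τ : (2:ℕ) ^ (τ - 1) ∈ W := by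
      rw [hW]
      exact Finset.mem_image_of_mem _ (Finset.mem_range.mpr (by omega))
    rw [hWdef] at h2τ
    obtain ⟨d, hd, hdeq⟩ := Finset.mem_image.mp h2τ
    have hdvd : d.totient ∣ n.totient := Nat.totient_dvd_of_dvd (Nat.dvd_of_mem_divisors hd)
    rw [hdeq, hφn] at hdvd
    have hle : (2:ℕ) ^ (τ - 1) ≤ 2 ^ E :=
      Nat.le_of_dvd (pow_pos (by norm_num) E) hdvd
    exact (Nat.pow_le_pow_iff_right (by norm_num)).mp hle
  have hbijE : ∀ m ≤ E, ∃! S : Finset ℕ, S ⊆ n.primeFactors ∧ ∑ p ∈ S, e p = m := by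
    intro m hm
    have h2m : (2:ℕ) ^ m ∈ W := by
      rw [hW]
      exact Finset.mem_image_of_mem _ (Finset.mem_range.mpr (by omega))
    rw [hWdef] at h2m
    obtain ⟨d, hd, hdeq⟩ := Finset.mem_image.mp h2m
    have hddvd : d ∣ n := Nat.dvd_of_mem_divisors hd
    have hdsq : Squarefree d := hsq.squarefree_of_dvd hddvd
    have hdS : d.primeFactors ⊆ n.primeFactors := Nat.primeFactors_mono hddvd (by omega)
    have hdprod : ∏ p ∈ d.primeFactors, p = d := Nat.prod_primeFactors_of_squarefree hdsq
    have hdsum : ∑ p ∈ d.primeFactors, e p = m := by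
      have h1 := hφprod d.primeFactors hdS
      rw [hdprod, hdeq] at h1
      exact (Nat.pow_right_injective (le_refl 2) h1).symm
    refine ⟨d.primeFactors, ⟨hdS, hdsum⟩, ?_⟩
    rintro T ⟨hTs, hTsum⟩
    have h1 := hφprod T hTs
    rw [hTsum] at h1
    have h2 : (∏ p ∈ T, p) = d := by
      refine hinj (hprodmem T hTs) hd ?_
      rw [h1, hdeq]
    have h3 := Nat.primeFactors_prod (fun p hp => Nat.prime_of_mem_primeFactors (hTs hp))
    rw [← h3, h2]
  have hEcard : (n.primeFactors.image e).card = k := by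
    rw [Finset.card_image_of_injOn heinj, hk]
  have hEW := keyB (n.primeFactors.image e).card _ rfl
    (transfer_bij heinj (by rw [← hEdef]; exact hbijE))
  rw [hEcard] at hEW
  have hPF : n.primeFactors = (Finset.range k).image (fun i => 2 ^ (2 ^ i) + 1) := by
    have h1 : n.primeFactors = (n.primeFactors.image e).image (fun i => 2 ^ i + 1) := by
      ext p
      simp only [Finset.image_image, Finset.mem_image, Function.comp_apply]
      constructor
      · intro hp
        exact ⟨p, hp, (he p hp).symm⟩
      · rintro ⟨q, hq, rfl⟩
        rw [← he q hq]
        exact hq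
    rw [h1, hEW, Finset.image_image]
    rfl
  have hferinj : ∀ a ∈ Finset.range k, ∀ b ∈ Finset.range k,
      2 ^ (2 ^ a) + 1 = 2 ^ (2 ^ b) + 1 → a = b := by
    intro a _ b _ hab
    have h1 : (2:ℕ) ^ (2 ^ a) = 2 ^ (2 ^ b) := by omega
    exact Nat.pow_right_injective (le_refl 2)
      (Nat.pow_right_injective (le_refl 2) h1)
  constructor
  · intro i hi
    have : 2 ^ (2 ^ i) + 1 ∈ n.primeFactors := by
      rw [hPF]
      exact Finset.mem_image_of_mem _ (Finset.mem_range.mpr hi)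
    exact Nat.prime_of_mem_primeFactors this
  · rw [← hnprod, hPF, Finset.prod_image hferinj]


/-- If `n` is `ℚ`-optimal with exactly `k` distinct prime factors, then the Fermat
numbers `F_0, …, F_{k-1}` are all prime and `n = F_0 F_1 ⋯ F_{k-1}`. -/
theorem fermat_primes_of_QOptimal (k n : ℕ) (hn : QOptimal n)
    (hk : n.primeFactors.card = k) :
    (∀ i < k, (fermat i).Prime) ∧ n = ∏ i ∈ Finset.range k, fermat i := by
  obtain ⟨h1, h2⟩ := hn
  obtain ⟨hp, he⟩ := fermat_test k n h1 h2 hk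
  exact ⟨fun i hi => hp i hi, by simpa [fermat] using he⟩
end

section
/- A natural number n is ℚ-optimal if and only if n = 2^{2^i} − 1 for some integer i with 0 ≤ i ≤ 5. In particular, there are exactly six ℚ-optimal numbers, and 2^{2^5} − 1 is the largest of them. -/
open Finset Nat

section SubsetSums

variable {α : Type*}

def HasUniqueSubsetSums (S : Finset α) (w : α → ℕ) : Prop :=
  ∀ m ≤ ∑ x ∈ S, w x, ∃! T, T ⊆ S ∧ ∑ x ∈ T, w x = m

variable {S : Finset α} {w : α → ℕ}

theorem mapsTo_sum_powerset_range :
    Set.MapsTo (fun T => ∑ x ∈ T, w x) S.powerset (range (∑ x ∈ S, w x + 1)) := fun _ hT =>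
  mem_range.2 <| Nat.lt_succ_of_le <| sum_le_sum_of_subset (mem_powerset.1 hT)

theorem hasUniqueSubsetSums_iff :
    HasUniqueSubsetSums S w ↔
      Set.InjOn (fun T => ∑ x ∈ T, w x) S.powerset ∧ ∑ x ∈ S, w x + 1 = 2 ^ #S := by
  constructor
  · intro h
    have hinj : Set.InjOn (fun T => ∑ x ∈ T, w x) S.powerset := fun T₁ h₁ T₂ h₂ heq =>
      (h _ (sum_le_sum_of_subset (mem_powerset.1 h₁))).unique
        ⟨mem_powerset.1 h₁, rfl⟩ ⟨mem_powerset.1 h₂, heq.symm⟩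
    refine ⟨hinj, ?_⟩
    have hsurj : Set.SurjOn (fun T => ∑ x ∈ T, w x) S.powerset (range (∑ x ∈ S, w x + 1)) :=
      fun m hm => by
        obtain ⟨T, ⟨hT, hsum⟩, -⟩ := h m (Nat.lt_succ_iff.1 (mem_range.1 hm))
        exact ⟨T, mem_powerset.2 hT, hsum⟩
    simpa using (card_nbij _ mapsTo_sum_powerset_range hinj hsurj).symm
  · rintro ⟨hinj, hcard⟩ m hm
    obtain ⟨T, hT, rfl⟩ := surjOn_of_injOn_of_card_le _ mapsTo_sum_powerset_range hinj
      (by simp [hcard]) (mem_range.2 (Nat.lt_succ_of_le hm))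
    exact ⟨T, ⟨mem_powerset.1 hT, rfl⟩, fun T' hT' => hinj (mem_powerset.2 hT'.1) hT hT'.2⟩

theorem two_pow_card_le_sum_add_one (hinj : Set.InjOn (fun T => ∑ x ∈ T, w x) S.powerset)
    {B : Finset α} (hB : B ⊆ S) : 2 ^ #B ≤ ∑ x ∈ B, w x + 1 := by
  simpa using card_le_card_of_injOn _ mapsTo_sum_powerset_range
    (hinj.mono (coe_subset.2 (powerset_mono.2 hB)))

theorem filter_lt_succ_eq_insert [DecidableEq α] (hinj : Set.InjOn w S) {x : α} (hx : x ∈ S) :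
    S.filter (w · < w x + 1) = insert x (S.filter (w · < w x)) := by
  ext y
  simp only [mem_filter, mem_insert]
  grind [Set.InjOn]

namespace HasUniqueSubsetSums

variable (h : HasUniqueSubsetSums S w)
include h

theorem injOn_sum : Set.InjOn (fun T => ∑ x ∈ T, w x) S.powerset :=
  (hasUniqueSubsetSums_iff.1 h).1

theorem injOn : Set.InjOn w S := fun x hx y hy hxy =>
  singleton_injective <| h.injOn_sum (by simpa using hx) (by simpa using hy) (by simpa using hxy)

variable [DecidableEq α]

/-- Otherwise the sum of all smaller weights plus one would not be a subset sum. -/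
theorem le_sum_filter_lt_add_one {x : α} (hx : x ∈ S) :
    w x ≤ ∑ y ∈ S.filter (w · < w x), w y + 1 := by
  set B := S.filter (w · < w x)
  by_contra! hlt
  have hxB : x ∉ B := by simp [B]
  have hle : ∑ y ∈ B, w y + 1 ≤ ∑ y ∈ S, w y := calc
    _ ≤ ∑ y ∈ insert x B, w y := by rw [sum_insert hxB]; omega
    _ ≤ _ := sum_le_sum_of_subset (insert_subset hx (filter_subset _ _))
  obtain ⟨T, ⟨hTS, hT⟩, -⟩ := h _ hle
  have hTB : T ⊆ B := fun y hy => mem_filter.2 ⟨hTS hy, by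
    have := single_le_sum (fun _ _ => Nat.zero_le _) hy (f := w)
    omega⟩
  have := sum_le_sum_of_subset hTB (f := w)
  omega

theorem sum_filter_lt_add_one_le (b : ℕ) :
    ∑ y ∈ S.filter (w · < b), w y + 1 ≤ 2 ^ #(S.filter (w · < b)) := by
  induction b with
  | zero => simp
  | succ b ih =>
    by_cases hb : ∃ x ∈ S, w x = b
    · obtain ⟨x, hx, rfl⟩ := hb
      have hxB : x ∉ S.filter (w · < w x) := by simp
      rw [filter_lt_succ_eq_insert h.injOn hx, sum_insert hxB, card_insert_of_notMem hxB, pow_succ]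
      have := h.le_sum_filter_lt_add_one hx
      omega
    · push Not at hb
      have hfilter : S.filter (w · < b + 1) = S.filter (w · < b) :=
        filter_congr fun y hy => by have := hb y hy; omega
      rwa [hfilter]

theorem exists_eq_two_pow {x : α} (hx : x ∈ S) : ∃ k, w x = 2 ^ k := by
  refine ⟨#(S.filter (w · < w x)), ?_⟩
  have hlt := h.sum_filter_lt_add_one_le (w x)
  have hle := two_pow_card_le_sum_add_one h.injOn_sum (filter_subset (w · < w x) S)
  have hlt' := h.sum_filter_lt_add_one_le (w x + 1)
  have hle' := two_pow_card_le_sum_add_one h.injOn_sum (filter_subset (w · < w x + 1) S)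
  have hxB : x ∉ S.filter (w · < w x) := by simp
  rw [filter_lt_succ_eq_insert h.injOn hx, sum_insert hxB, card_insert_of_notMem hxB,
    pow_succ] at hlt' hle'
  omega

end HasUniqueSubsetSums

theorem injOn_sum_two_pow {e : α → ℕ} (he : Set.InjOn e S) :
    Set.InjOn (fun T => ∑ x ∈ T, 2 ^ e x) S.powerset := by
  intro T₁ h₁ T₂ h₂ hsum
  simp only [coe_powerset, Set.mem_preimage, Set.mem_powerset_iff] at h₁ h₂
  have himage : T₁.image e = T₂.image e := geomSum_injective le_rfl <| by
    simpa [sum_image (he.mono h₁), sum_image (he.mono h₂)] using hsum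
  refine coe_injective <| (he.image_eq_image_iff h₁ h₂).1 ?_
  rw [← coe_image, ← coe_image, himage]

theorem hasUniqueSubsetSums_of_two_pow (hw : Set.InjOn w S) (hpow : ∀ x ∈ S, ∃ k, w x = 2 ^ k)
    (hsum : ∑ x ∈ S, w x + 1 = 2 ^ #S) : HasUniqueSubsetSums S w := by
  choose! e he using hpow
  refine hasUniqueSubsetSums_iff.2 ⟨?_, hsum⟩
  have hinj : Set.InjOn e S := fun x hx y hy hxy => hw hx hy (by rw [he x hx, he y hy, hxy])
  have hsum_eq : ∀ T ∈ S.powerset, ∑ x ∈ T, w x = ∑ x ∈ T, 2 ^ e x := fun T hT =>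
    sum_congr rfl fun x hx => he x (mem_powerset.1 hT hx)
  intro T₁ h₁ T₂ h₂ hT
  refine injOn_sum_two_pow hinj h₁ h₂ ?_
  simpa only [hsum_eq T₁ h₁, hsum_eq T₂ h₂] using hT

end SubsetSums

section PrimeProducts

variable {M ι : Type*} [CommMonoidWithZero M] [IsCancelMulZero M] {f : ι → M}

theorem exists_subset_associated_of_dvd_prod [DecidableEq ι] {S : Finset ι}
    (hf : ∀ i ∈ S, Prime (f i)) {d : M} (hd : d ∣ ∏ i ∈ S, f i) :
    ∃ T ⊆ S, Associated (∏ i ∈ T, f i) d := by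
  induction S using Finset.induction_on generalizing d with
  | empty =>
    have hunit : IsUnit d := isUnit_of_dvd_one (by simpa using hd)
    exact ⟨∅, subset_rfl, by simpa using (associated_one_iff_isUnit.2 hunit).symm⟩
  | insert a s ha ih =>
    have hfa : Prime (f a) := hf a (mem_insert_self a s)
    have hfs : ∀ i ∈ s, Prime (f i) := fun i hi => hf i (mem_insert_of_mem hi)
    rw [prod_insert ha] at hd
    by_cases hfad : f a ∣ d
    · obtain ⟨e, rfl⟩ := hfad
      obtain ⟨T, hTs, hT⟩ := ih hfs ((mul_dvd_mul_iff_left hfa.ne_zero).1 hd)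
      refine ⟨insert a T, insert_subset_insert a hTs, ?_⟩
      rw [prod_insert fun haT => ha (hTs haT)]
      exact hT.mul_left (f a)
    · obtain ⟨y, hy⟩ := hd
      obtain ⟨z, rfl⟩ := (hfa.dvd_or_dvd ⟨_, hy.symm⟩).resolve_left hfad
      have hdz : ∏ i ∈ s, f i = d * z :=
        mul_left_cancel₀ hfa.ne_zero (hy.trans (mul_left_comm _ _ _))
      obtain ⟨T, hTs, hT⟩ := ih hfs ⟨z, hdz⟩
      exact ⟨T, hTs.trans (subset_insert a s), hT⟩

variable [StrongNormalizationMonoid M] {S : Finset ι}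

theorem subset_of_prod_dvd_prod (hf : ∀ i ∈ S, Prime (f i) ∧ normalize (f i) = f i)
    (hinj : Set.InjOn f S) {T₁ T₂ : Finset ι} (h₁ : T₁ ⊆ S) (h₂ : T₂ ⊆ S)
    (h : ∏ i ∈ T₁, f i ∣ ∏ i ∈ T₂, f i) : T₁ ⊆ T₂ := by
  intro i hi
  obtain ⟨j, hj, hij⟩ := (hf i (h₁ hi)).1.exists_mem_finset_dvd ((dvd_prod_of_mem f hi).trans h)
  have hfij : f i = f j :=
    ((hf i (h₁ hi)).1.associated_of_dvd (hf j (h₂ hj)).1 hij).eq_of_normalized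
      (hf i (h₁ hi)).2 (hf j (h₂ hj)).2
  rwa [hinj (h₁ hi) (h₂ hj) hfij]

theorem bijOn_prod_powerset [DecidableEq ι] (hf : ∀ i ∈ S, Prime (f i) ∧ normalize (f i) = f i)
    (hinj : Set.InjOn f S) :
    Set.BijOn (fun T => ∏ i ∈ T, f i) S.powerset {d | normalize d = d ∧ d ∣ ∏ i ∈ S, f i} := by
  have hnorm : ∀ T ⊆ S, normalize (∏ i ∈ T, f i) = ∏ i ∈ T, f i := fun T hT =>
    (map_prod normalizeHom f T).trans (prod_congr rfl fun i hi => (hf i (hT hi)).2)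
  refine ⟨fun T hT => ⟨hnorm T (mem_powerset.1 hT), prod_dvd_prod_of_subset _ _ _
    (mem_powerset.1 hT)⟩, fun T₁ h₁ T₂ h₂ h => ?_, fun d ⟨hd, hdvd⟩ => ?_⟩
  · rw [mem_coe, mem_powerset] at h₁ h₂
    exact Subset.antisymm (subset_of_prod_dvd_prod hf hinj h₁ h₂ h.dvd)
      (subset_of_prod_dvd_prod hf hinj h₂ h₁ h.symm.dvd)
  · obtain ⟨T, hTS, hT⟩ := exists_subset_associated_of_dvd_prod (fun i hi => (hf i hi).1) hdvd
    exact ⟨T, mem_powerset.2 hTS, hT.eq_of_normalized (hnorm T hTS) hd⟩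

end PrimeProducts

theorem Set.BijOn.existsUnique_iff {α β : Type*} {g : α → β} {s : Set α} {t : Set β}
    (hg : Set.BijOn g s t) (p : β → Prop) : (∃! b, b ∈ t ∧ p b) ↔ ∃! a, a ∈ s ∧ p (g a) := by
  constructor
  · rintro ⟨b, ⟨hb, hpb⟩, hu⟩
    obtain ⟨a, ha, rfl⟩ := hg.surjOn hb
    exact ⟨a, ⟨ha, hpb⟩, fun a' ⟨ha', hpa'⟩ => hg.injOn ha' ha (hu _ ⟨hg.mapsTo ha', hpa'⟩)⟩
  · rintro ⟨a, ⟨ha, hpa⟩, hu⟩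
    refine ⟨g a, ⟨hg.mapsTo ha, hpa⟩, fun b ⟨hb, hpb⟩ => ?_⟩
    obtain ⟨a', ha', rfl⟩ := hg.surjOn hb
    rw [hu a' ⟨ha', hpb⟩]

open Polynomial

theorem bijOn_prod_cyclotomic {n : ℕ} (hn : 0 < n) :
    Set.BijOn (fun T => ∏ i ∈ T, cyclotomic i ℚ) n.divisors.powerset
      {d | d.Monic ∧ d ∣ X ^ n - 1} := by
  have hf : ∀ i ∈ n.divisors,
      Prime (cyclotomic i ℚ) ∧ normalize (cyclotomic i ℚ) = cyclotomic i ℚ := fun i hi =>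
    ⟨(cyclotomic.irreducible_rat (Nat.pos_of_mem_divisors hi)).prime,
      (cyclotomic.monic i ℚ).normalize_eq_self⟩
  have h := bijOn_prod_powerset hf cyclotomic_injective.injOn
  rw [prod_cyclotomic_eq_X_pow_sub_one hn] at h
  convert h using 1
  ext d
  refine and_congr_left fun hd => (normalize_eq_self_iff_monic ?_).symm
  rintro rfl
  exact X_pow_sub_C_ne_zero hn (1 : ℚ) (by simpa using zero_dvd_iff.1 hd)

theorem qOptimal_iff_hasUniqueSubsetSums {n : ℕ} :
    QOptimal n ↔ 0 < n ∧ HasUniqueSubsetSums n.divisors φ := by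
  refine and_congr_right fun hn => ?_
  rw [HasUniqueSubsetSums, Nat.sum_totient]
  refine forall₂_congr fun m _ => ?_
  calc (∃! d : ℚ[X], d.Monic ∧ d ∣ X ^ n - 1 ∧ d.natDegree = m)
      ↔ ∃! d : ℚ[X], d ∈ {d : ℚ[X] | d.Monic ∧ d ∣ X ^ n - 1} ∧ d.natDegree = m := by
        simp only [Set.mem_ofPred_eq, and_assoc]
    _ ↔ ∃! T : Finset ℕ, T ∈ (n.divisors.powerset : Set (Finset ℕ)) ∧
          (∏ i ∈ T, cyclotomic i ℚ).natDegree = m :=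
        (bijOn_prod_cyclotomic hn).existsUnique_iff _
    _ ↔ ∃! T : Finset ℕ, T ⊆ n.divisors ∧ ∑ i ∈ T, φ i = m := by
        simp only [mem_coe, mem_powerset,
          natDegree_prod_of_monic _ _ fun i _ => cyclotomic.monic i ℚ, natDegree_cyclotomic]

theorem Nat.card_divisors_of_squarefree {n : ℕ} (hn : Squarefree n) :
    #n.divisors = 2 ^ #n.primeFactors := by
  rw [Nat.card_divisors hn.ne_zero, ← prod_const]
  exact prod_congr rfl fun p hp => by
    rw [Nat.factorization_eq_one_of_squarefree hn (Nat.prime_of_mem_primeFactors hp)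
      (Nat.dvd_of_mem_primeFactors hp)]

theorem exists_le_five_eq_two_pow_two_pow_sub_one {n : ℕ} (hn : 0 < n)
    (h : HasUniqueSubsetSums n.divisors φ) : ∃ i ≤ 5, n = 2 ^ 2 ^ i - 1 := by
  have hdiv : ∀ {d}, d ∣ n → d ∈ n.divisors := fun hd => Nat.mem_divisors.2 ⟨hd, hn.ne'⟩
  have hpow : ∀ d, d ∣ n → ∃ k, φ d = 2 ^ k := fun d hd => h.exists_eq_two_pow (hdiv hd)
  have hodd : ¬2 ∣ n := fun h2 =>
    absurd (h.injOn (hdiv (one_dvd n)) (hdiv h2) (by simp)) (by norm_num)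
  have hsq : Squarefree n := Nat.squarefree_iff_prime_squarefree.2 fun p hp hpp => by
    obtain ⟨k, hk⟩ := hpow _ hpp
    rw [← sq, totient_prime_pow hp two_pos] at hk
    have hp2 : p = 2 := (Nat.prime_dvd_prime_iff_eq hp Nat.prime_two).1
      (hp.dvd_of_dvd_pow (hk ▸ dvd_mul_of_dvd_left (dvd_pow_self p (by norm_num)) _))
    exact hodd (hp2 ▸ (dvd_mul_right p p).trans hpp)
  have hsum := (hasUniqueSubsetSums_iff.1 h).2
  rw [Nat.sum_totient, Nat.card_divisors_of_squarefree hsq] at hsum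
  refine ⟨#n.primeFactors, ?_, by omega⟩
  by_contra! ht
  -- Euler: `641 ∣ 2 ^ 2 ^ 5 + 1`, a factor of `2 ^ 2 ^ 6 - 1`.
  have h641 : 641 ∣ n := by
    have hdvd := Nat.pow_sub_one_dvd_pow_sub_one 2 (pow_dvd_pow 2 ht)
    rw [show n = 2 ^ 2 ^ #n.primeFactors - 1 by omega]
    exact (by norm_num : 641 ∣ 2 ^ 2 ^ 6 - 1).trans hdvd
  obtain ⟨k, hk⟩ := hpow 641 h641
  rw [totient_prime (by norm_num)] at hk
  have h5 : 5 ∣ 2 ^ k := hk ▸ (by norm_num)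
  exact absurd ((Nat.prime_dvd_prime_iff_eq Nat.prime_five Nat.prime_two).1
    (Nat.prime_five.dvd_of_dvd_pow h5)) (by norm_num)

theorem totient_prod_fermatNumber {U : Finset ℕ} (hU : ∀ c ∈ U, (fermatNumber c).Prime) :
    φ (∏ c ∈ U, fermatNumber c) = 2 ^ ∑ c ∈ U, 2 ^ c := by
  induction U using Finset.induction_on with
  | empty => simp
  | insert a s ha ih =>
    have hcop : Coprime (fermatNumber a) (∏ c ∈ s, fermatNumber c) := Coprime.prod_right
      fun c hc => coprime_fermatNumber_fermatNumber (ne_of_mem_of_not_mem hc ha).symm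
    rw [prod_insert ha, sum_insert ha, totient_mul hcop,
      totient_prime (hU a (mem_insert_self a s)), ih fun c hc => hU c (mem_insert_of_mem hc),
      pow_add, fermatNumber, Nat.add_sub_cancel]

theorem hasUniqueSubsetSums_totient_two_pow_two_pow_sub_one {i : ℕ} (hi : i ≤ 5) :
    HasUniqueSubsetSums (2 ^ 2 ^ i - 1).divisors φ := by
  have hprime : ∀ c ∈ range i, (fermatNumber c).Prime := fun c hc => by
    have : c < 5 := by simp at hc; omega
    interval_cases c <;> norm_num [fermatNumber]
  have hprod : ∏ c ∈ range i, fermatNumber c = 2 ^ 2 ^ i - 1 := by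
    rw [Nat.prod_fermatNumber, fermatNumber]
    omega
  have hbij : Set.BijOn (fun U => ∏ c ∈ U, fermatNumber c) (range i).powerset
      (2 ^ 2 ^ i - 1).divisors := by
    convert bijOn_prod_powerset (fun c hc => ⟨(hprime c hc).prime, normalize_eq _⟩)
      fermatNumber_injective.injOn using 1
    ext d
    simp [hprod, (Nat.sub_pos_of_lt (Nat.one_lt_two_pow (pow_ne_zero i two_ne_zero))).ne']
  have htotient : ∀ U ∈ (range i).powerset, φ (∏ c ∈ U, fermatNumber c) = 2 ^ ∑ c ∈ U, 2 ^ c :=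
    fun U hU => totient_prod_fermatNumber fun c hc => hprime c (mem_powerset.1 hU hc)
  apply hasUniqueSubsetSums_of_two_pow
  · rintro _ hd₁ _ hd₂ heq
    obtain ⟨U₁, hU₁, rfl⟩ := hbij.surjOn hd₁
    obtain ⟨U₂, hU₂, rfl⟩ := hbij.surjOn hd₂
    rw [htotient U₁ hU₁, htotient U₂ hU₂] at heq
    rw [geomSum_injective le_rfl (Nat.pow_right_injective le_rfl heq)]
  · intro d hd
    obtain ⟨U, hU, rfl⟩ := hbij.surjOn hd
    exact ⟨_, htotient U hU⟩
  · rw [Nat.sum_totient, ← card_nbij _ hbij.mapsTo hbij.injOn hbij.surjOn, card_powerset,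
      card_range]
    have := Nat.one_le_two_pow (n := 2 ^ i)
    omega

/-- A natural number is `ℚ`-optimal iff it equals `2^(2^i) - 1` for some `0 ≤ i ≤ 5`.
In particular there are exactly six `ℚ`-optimal numbers, the largest being `2^(2^5)-1`. -/
theorem QOptimal_iff (n : ℕ) :
    QOptimal n ↔ ∃ i : ℕ, i ≤ 5 ∧ n = 2 ^ (2 ^ i) - 1 := by
  rw [qOptimal_iff_hasUniqueSubsetSums]
  constructor
  · rintro ⟨hn, h⟩
    exact exists_le_five_eq_two_pow_two_pow_sub_one hn h
  · rintro ⟨i, hi, rfl⟩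
    exact ⟨Nat.sub_pos_of_lt (Nat.one_lt_two_pow (pow_ne_zero i two_ne_zero)),
      hasUniqueSubsetSums_totient_two_pow_two_pow_sub_one hi⟩
end
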